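/- arXiv:1901.03521 — 5 statements merged into one kernel-verified Lean document; each statement's English description precedes it below -/
import Mathlib

section
/- If {μ_n} is a sequence of finite Borel measures on [0,∞) and L: [0,∞) → ℝ is a continuous function such that L_{μ_n}(λ) → L(λ) for every λ ≥ 0, then there exists a finite measure μ on [0,∞) with L_μ = L and μ_n → μ weakly. -/
/-!
Substituting `t = e^{-x}` maps `[0, ∞]` onto `[0, 1]` and turns `x ↦ e^{-k x}` into `t ↦ t^k`.
Convergence of the Laplace transforms at the integers is therefore convergence of moments, which
by Weierstrass approximation gives convergence of `∫ f dμₙ` for every compactly supported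
continuous `f`; the Riesz–Markov–Kakutani theorem turns the limit functional into a measure `ν`.
Continuity of `L` at `0` makes the sequence tight, since
`(1 - e^{-λR}) μₙ(R, ∞) ≤ L_{μₙ}(0) - L_{μₙ}(λ)`. Vague convergence to `ν` together with tightness is weak convergence,
and testing it against `x ↦ e^{-λx}` shows that `L` is the Laplace transform of `ν`.
-/

open MeasureTheory Filter Set Topology Real
open scoped NNReal CompactlySupported BoundedContinuousFunction

section Moments

variable {X : Type*} [MeasurableSpace X] {μ : ℕ → Measure X} [∀ n, IsFiniteMeasure (μ n)]
  {φ : X → ℝ} {a b : ℝ}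

lemma integrable_comp_of_mem_Icc {ρ : Measure X} [IsFiniteMeasure ρ] (hφ : Measurable φ)
    (hφab : ∀ x, φ x ∈ Icc a b) {g : ℝ → ℝ} (hg : Continuous g) :
    Integrable (fun x => g (φ x)) ρ := by
  obtain ⟨C, hC⟩ := isCompact_Icc.exists_bound_of_continuousOn hg.continuousOn
  exact .of_bound (hg.measurable.comp hφ).aestronglyMeasurable C
    (ae_of_all _ fun x => hC _ (hφab x))

lemma exists_tendsto_integral_eval_comp (hφ : Measurable φ) (hφab : ∀ x, φ x ∈ Icc a b)
    (hmom : ∀ k : ℕ, ∃ m, Tendsto (fun n => ∫ x, φ x ^ k ∂μ n) atTop (𝓝 m))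
    (p : Polynomial ℝ) : ∃ c, Tendsto (fun n => ∫ x, p.eval (φ x) ∂μ n) atTop (𝓝 c) := by
  induction p using Polynomial.induction_on' with
  | add p q hp hq =>
    obtain ⟨c, hc⟩ := hp
    obtain ⟨d, hd⟩ := hq
    refine ⟨c + d, (hc.add hd).congr fun n => ?_⟩
    simp only [Polynomial.eval_add]
    exact (integral_add (integrable_comp_of_mem_Icc hφ hφab p.continuous)
      (integrable_comp_of_mem_Icc hφ hφab q.continuous)).symm
  | monomial k r =>
    obtain ⟨m, hm⟩ := hmom k
    refine ⟨r * m, (hm.const_mul r).congr fun n => ?_⟩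
    simp only [Polynomial.eval_monomial, integral_const_mul]

lemma exists_tendsto_integral_comp (hφ : Measurable φ) (hφab : ∀ x, φ x ∈ Icc a b)
    (hmom : ∀ k : ℕ, ∃ m, Tendsto (fun n => ∫ x, φ x ^ k ∂μ n) atTop (𝓝 m))
    {g : ℝ → ℝ} (hg : Continuous g) :
    ∃ c, Tendsto (fun n => ∫ x, g (φ x) ∂μ n) atTop (𝓝 c) := by
  obtain ⟨B, hB⟩ : BddAbove (range fun n => (μ n).real univ) := by
    obtain ⟨m, hm⟩ := hmom 0
    simpa using hm.bddAbove_range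
  have hB0 : 0 < B + 1 := by linarith [hB ⟨0, rfl⟩, measureReal_nonneg (μ := μ 0) (s := univ)]
  refine cauchySeq_tendsto_of_complete (Metric.cauchySeq_iff'.2 fun ε hε => ?_)
  obtain ⟨p, hp⟩ := exists_polynomial_near_of_continuousOn a b g hg.continuousOn
    (ε / (3 * (B + 1))) (by positivity)
  have hclose : ∀ n, dist (∫ x, g (φ x) ∂μ n) (∫ x, p.eval (φ x) ∂μ n) ≤ ε / 3 := by
    intro n
    rw [dist_eq_norm, ← integral_sub (integrable_comp_of_mem_Icc hφ hφab hg)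
      (integrable_comp_of_mem_Icc hφ hφab p.continuous)]
    calc _ ≤ ε / (3 * (B + 1)) * (μ n).real univ :=
          norm_integral_le_of_norm_le_const (ae_of_all _ fun x => by
            rw [Real.norm_eq_abs, abs_sub_comm]; exact (hp _ (hφab x)).le)
      _ ≤ ε / (3 * (B + 1)) * (B + 1) := by
          gcongr; linarith [hB ⟨n, rfl⟩]
      _ = ε / 3 := by field_simp
  obtain ⟨c, hc⟩ := exists_tendsto_integral_eval_comp hφ hφab hmom p
  obtain ⟨N, hN⟩ := Metric.cauchySeq_iff'.1 hc.cauchySeq (ε / 3) (by positivity)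
  refine ⟨N, fun n hn => ?_⟩
  calc _ ≤ dist (∫ x, g (φ x) ∂μ n) (∫ x, p.eval (φ x) ∂μ n)
        + dist (∫ x, p.eval (φ x) ∂μ n) (∫ x, p.eval (φ x) ∂μ N)
        + dist (∫ x, p.eval (φ x) ∂μ N) (∫ x, g (φ x) ∂μ N) := dist_triangle4 _ _ _ _
    _ < ε := by
        linarith [hclose n, hN n hn, hclose N,
          dist_comm (∫ x, p.eval (φ x) ∂μ N) (∫ x, g (φ x) ∂μ N)]

end Moments

section VagueConvergence

variable {X : Type*} [TopologicalSpace X]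

lemma exists_compactlySupported_eqOn_one [T2Space X] [LocallyCompactSpace X]
    {K : Set X} (hK : IsCompact K) :
    ∃ χ : C_c(X, ℝ), EqOn χ 1 K ∧ ∀ x, χ x ∈ Icc 0 1 := by
  obtain ⟨χ, hχK, -, hχc, hχ01⟩ :=
    exists_continuous_one_zero_of_isCompact hK isClosed_empty (disjoint_empty K)
  exact ⟨⟨χ, hχc⟩, hχK, hχ01⟩

variable [MeasurableSpace X]

def TendstoVaguely (μ : ℕ → Measure X) (ν : Measure X) : Prop :=
  ∀ f : C_c(X, ℝ), Tendsto (fun n => ∫ x, f x ∂μ n) atTop (𝓝 (∫ x, f x ∂ν))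

variable [BorelSpace X] {μ : ℕ → Measure X} {ν : Measure X}

lemma integral_le_measureReal_univ {ρ : Measure X} [IsFiniteMeasure ρ] {χ : C_c(X, ℝ)}
    (hχ : ∀ x, χ x ≤ 1) : ∫ x, χ x ∂ρ ≤ ρ.real univ := by
  simpa using integral_mono χ.integrable (integrable_const 1) hχ

lemma abs_integral_sub_integral_mul_le {ρ : Measure X} [IsFiniteMeasure ρ] (f : X →ᵇ ℝ)
    {χ : C_c(X, ℝ)} (hχ : ∀ x, χ x ∈ Icc 0 1) :
    |∫ x, f x ∂ρ - ∫ x, f x * χ x ∂ρ| ≤ ‖f‖ * (ρ.real univ - ∫ x, χ x ∂ρ) := by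
  have hfχ : Integrable (fun x => f x * χ x) ρ :=
    (f.continuous.mul χ.continuous).integrable_of_hasCompactSupport χ.hasCompactSupport.mul_left
  rw [← integral_sub (f.integrable ρ) hfχ, ← Real.norm_eq_abs]
  calc ‖∫ x, (f x - f x * χ x) ∂ρ‖ ≤ ∫ x, ‖f‖ * (1 - χ x) ∂ρ := by
        refine norm_integral_le_of_norm_le (((integrable_const 1).sub χ.integrable).const_mul _)
          (ae_of_all _ fun x => ?_)
        rw [← mul_one_sub, norm_mul, Real.norm_of_nonneg (sub_nonneg.2 (hχ x).2)]
        exact mul_le_mul_of_nonneg_right (f.norm_coe_le_norm x) (sub_nonneg.2 (hχ x).2)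
    _ = ‖f‖ * (ρ.real univ - ∫ x, χ x ∂ρ) := by
        rw [integral_const_mul, integral_sub (integrable_const 1) χ.integrable]
        simp

variable [T2Space X]

lemma measureReal_le_integral_of_eqOn_one {ρ : Measure X} [IsFiniteMeasureOnCompacts ρ]
    {K : Set X} (hK : IsCompact K) {χ : C_c(X, ℝ)} (hχK : EqOn χ 1 K) (hχ : ∀ x, 0 ≤ χ x) :
    ρ.real K ≤ ∫ x, χ x ∂ρ := by
  rw [← integral_indicator_one hK.measurableSet]
  refine integral_mono ((integrableOn_const hK.measure_lt_top.ne).integrable_indicator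
    hK.measurableSet) χ.integrable fun x => ?_
  by_cases hx : x ∈ K
  · simp [hx, hχK hx]
  · simp [hx, hχ x]

lemma measureReal_univ_sub_integral_le {ρ : Measure X} [IsFiniteMeasure ρ]
    {K : Set X} (hK : IsCompact K) {χ : C_c(X, ℝ)} (hχK : EqOn χ 1 K) (hχ : ∀ x, 0 ≤ χ x) :
    ρ.real univ - ∫ x, χ x ∂ρ ≤ ρ.real Kᶜ := by
  linarith [measureReal_compl (μ := ρ) hK.measurableSet,
    measureReal_le_integral_of_eqOn_one (ρ := ρ) hK hχK hχ]

theorem exists_tendstoVaguely_of_forall_exists_tendsto [LocallyCompactSpace X]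
    [∀ n, IsFiniteMeasureOnCompacts (μ n)]
    (h : ∀ f : C_c(X, ℝ), ∃ c, Tendsto (fun n => ∫ x, f x ∂μ n) atTop (𝓝 c)) :
    ∃ ν : Measure X, ν.Regular ∧ TendstoVaguely μ ν := by
  choose Λ hΛ using h
  let Λₗ : C_c(X, ℝ) →ₗ[ℝ] ℝ :=
    { toFun := Λ
      map_add' := fun f g => tendsto_nhds_unique (hΛ (f + g)) <|
        ((hΛ f).add (hΛ g)).congr fun n => (integral_add f.integrable g.integrable).symm
      map_smul' := fun r f => tendsto_nhds_unique (hΛ (r • f)) <|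
        ((hΛ f).const_mul r).congr fun n => (integral_const_mul r _).symm }
  let Λₚ := PositiveLinearMap.mk₀ Λₗ fun f hf =>
    ge_of_tendsto' (hΛ f) fun n => integral_nonneg hf
  refine ⟨RealRMK.rieszMeasure Λₚ, inferInstance, fun f => ?_⟩
  rw [RealRMK.integral_rieszMeasure]
  exact hΛ f

variable [LocallyCompactSpace X] [∀ n, IsFiniteMeasure (μ n)]

theorem TendstoVaguely.isFiniteMeasure_and_measureReal_univ_eq [ν.Regular]
    (hvague : TendstoVaguely μ ν)
    (htight : ∀ ε > 0, ∃ K, IsCompact K ∧ ∀ᶠ n in atTop, (μ n).real Kᶜ ≤ ε)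
    {m : ℝ} (hmass : Tendsto (fun n => (μ n).real univ) atTop (𝓝 m)) :
    IsFiniteMeasure ν ∧ ν.real univ = m := by
  have hm : 0 ≤ m := ge_of_tendsto' hmass fun n => measureReal_nonneg
  have hle : ν univ ≤ ENNReal.ofReal m := by
    rw [isOpen_univ.measure_eq_iSup_isCompact ν]
    refine iSup₂_le fun K _ => iSup_le fun hK => ?_
    obtain ⟨χ, hχK, hχ⟩ := exists_compactlySupported_eqOn_one hK
    have hχm : ∫ x, χ x ∂ν ≤ m := le_of_tendsto_of_tendsto' (hvague χ) hmass fun n =>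
      integral_le_measureReal_univ fun x => (hχ x).2
    rw [← ofReal_measureReal hK.measure_lt_top.ne]
    exact ENNReal.ofReal_le_ofReal
      ((measureReal_le_integral_of_eqOn_one hK hχK fun x => (hχ x).1).trans hχm)
  have : IsFiniteMeasure ν := ⟨hle.trans_lt ENNReal.ofReal_lt_top⟩
  refine ⟨this, le_antisymm (ENNReal.toReal_le_of_le_ofReal hm hle) ?_⟩
  refine le_of_forall_pos_le_add fun ε hε => ?_
  obtain ⟨K, hK, hKε⟩ := htight ε hε
  obtain ⟨χ, hχK, hχ⟩ := exists_compactlySupported_eqOn_one hK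
  have : m - ε ≤ ∫ x, χ x ∂ν := le_of_tendsto_of_tendsto (hmass.sub_const ε) (hvague χ) <|
    hKε.mono fun n hn => by
      linarith [measureReal_univ_sub_integral_le (ρ := μ n) hK hχK fun x => (hχ x).1]
  linarith [integral_le_measureReal_univ (ρ := ν) fun x => (hχ x).2]

theorem TendstoVaguely.tendsto_integral_of_tight [IsFiniteMeasure ν]
    (hvague : TendstoVaguely μ ν)
    (htight : ∀ ε > 0, ∃ K, IsCompact K ∧ ∀ᶠ n in atTop, (μ n).real Kᶜ ≤ ε)
    (hmass : Tendsto (fun n => (μ n).real univ) atTop (𝓝 (ν.real univ))) (f : X →ᵇ ℝ) :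
    Tendsto (fun n => ∫ x, f x ∂μ n) atTop (𝓝 (∫ x, f x ∂ν)) := by
  rw [Metric.tendsto_nhds]
  intro ε hε
  set δ := ε / (3 * (‖f‖ + 1)) with hδ_def
  have hδ : 0 < δ := by positivity
  obtain ⟨K, hK, hKδ⟩ := htight δ hδ
  obtain ⟨χ, hχK, hχ⟩ := exists_compactlySupported_eqOn_one hK
  have hχ0 : ∀ x, 0 ≤ χ x := fun x => (hχ x).1
  let fχ : C_c(X, ℝ) :=
    ⟨⟨fun x => f x * χ x, by fun_prop⟩, χ.hasCompactSupport.mul_left⟩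
  have hνtail : ν.real univ - ∫ x, χ x ∂ν ≤ δ :=
    le_of_tendsto (hmass.sub (hvague χ)) <|
      hKδ.mono fun n hn => (measureReal_univ_sub_integral_le hK hχK hχ0).trans hn
  filter_upwards [hKδ, Metric.tendsto_nhds.1 (hvague fχ) δ hδ] with n hn hfχ
  have hμtail := abs_integral_sub_integral_mul_le (ρ := μ n) f hχ
  have hνtail' := abs_integral_sub_integral_mul_le (ρ := ν) f hχ
  have hμK := measureReal_univ_sub_integral_le (ρ := μ n) hK hχK hχ0
  rw [Real.dist_eq] at hfχ ⊢
  change |∫ x, f x * χ x ∂μ n - ∫ x, f x * χ x ∂ν| < δ at hfχ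
  calc |∫ x, f x ∂μ n - ∫ x, f x ∂ν|
      ≤ |∫ x, f x ∂μ n - ∫ x, f x * χ x ∂μ n| + |∫ x, f x * χ x ∂μ n - ∫ x, f x * χ x ∂ν|
        + |∫ x, f x ∂ν - ∫ x, f x * χ x ∂ν| := by
        linarith [abs_sub_le (∫ x, f x ∂μ n) (∫ x, f x * χ x ∂μ n) (∫ x, f x ∂ν),
          abs_sub_le (∫ x, f x * χ x ∂μ n) (∫ x, f x * χ x ∂ν) (∫ x, f x ∂ν),
          abs_sub_comm (∫ x, f x * χ x ∂ν) (∫ x, f x ∂ν)]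
    _ < ‖f‖ * δ + δ + ‖f‖ * δ := by
        linarith [hμtail.trans (mul_le_mul_of_nonneg_left (hμK.trans hn) (norm_nonneg f)),
          hνtail'.trans (mul_le_mul_of_nonneg_left hνtail (norm_nonneg f))]
    _ ≤ ε := by
        rw [hδ_def]; field_simp; nlinarith [norm_nonneg f]

end VagueConvergence

section Laplace

lemma exists_continuous_comp_exp_neg_eq (f : C_c(ℝ≥0, ℝ)) :
    ∃ g : ℝ → ℝ, Continuous g ∧ ∀ x : ℝ≥0, g (exp (-x)) = f x := by
  obtain ⟨R, hR⟩ := f.hasCompactSupport.isCompact.bddAbove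
  have hf0 : ∀ x, R < x → f x = 0 := fun x hx =>
    image_eq_zero_of_notMem_tsupport fun hx' => (hR hx').not_gt hx
  -- without the guard, `log 0 = 0` would give the value `f 0` at `t = 0`
  refine ⟨fun t => if 0 < t then f (-log t).toNNReal else 0, ?_, fun x => ?_⟩
  · have hzero : ∀ t < exp (-R), (if 0 < t then f (-log t).toNNReal else 0) = 0 := by
      intro t ht
      split_ifs with ht0
      · refine hf0 _ (Real.lt_toNNReal_iff_coe_lt.2 ?_)
        linarith [(Real.log_lt_iff_lt_exp ht0).2 ht]
      · rfl
    refine continuous_iff_continuousAt.2 fun t => ?_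
    rcases lt_or_ge t (exp (-R)) with ht | ht
    · exact (continuousAt_const (y := (0:ℝ))).congr
        (eventually_of_mem (Iio_mem_nhds ht) fun s hs => (hzero s hs).symm)
    · have ht0 : 0 < t := (exp_pos _).trans_le ht
      refine ContinuousAt.congr (f := fun t => f (-log t).toNNReal) ?_
        (eventually_of_mem (Ioi_mem_nhds ht0) fun s hs => (if_pos hs).symm)
      exact f.continuous.continuousAt.comp
        (continuous_real_toNNReal.continuousAt.comp (continuousAt_log ht0.ne').neg)
  · simp [exp_pos]

lemma exp_neg_mul_le_one {l : ℝ} (hl : 0 ≤ l) (x : ℝ≥0) : exp (-l * x) ≤ 1 := by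
  rw [exp_le_one_iff, neg_mul, neg_nonpos]
  positivity

lemma integrable_exp_neg_mul (ρ : Measure ℝ≥0) [IsFiniteMeasure ρ] {l : ℝ} (hl : 0 ≤ l) :
    Integrable (fun x : ℝ≥0 => exp (-l * x)) ρ :=
  .of_bound (by fun_prop : Continuous _).aestronglyMeasurable 1 (ae_of_all _ fun x => by
    rw [norm_of_nonneg (exp_pos _).le]; exact exp_neg_mul_le_one hl x)

lemma mul_measureReal_Ioi_le (ρ : Measure ℝ≥0) [IsFiniteMeasure ρ] {l : ℝ} (hl : 0 ≤ l)
    (R : ℝ≥0) :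
    (1 - exp (-l * R)) * ρ.real (Ioi R) ≤ ρ.real univ - ∫ x, exp (-l * x) ∂ρ := by
  have hint := integrable_exp_neg_mul ρ hl
  have hR : 0 ≤ 1 - exp (-l * R) := sub_nonneg.2 (exp_neg_mul_le_one hl R)
  calc (1 - exp (-l * R)) * ρ.real (Ioi R)
      ≤ (1 - exp (-l * R)) * ρ.real {x | 1 - exp (-l * R) ≤ 1 - exp (-l * x)} := by
        refine mul_le_mul_of_nonneg_left (measureReal_mono fun x (hx : R < x) => ?_) hR
        have : (R : ℝ) ≤ x := hx.le
        simp only [mem_ofPred_eq, sub_le_sub_iff_left, exp_le_exp]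
        nlinarith
    _ ≤ ∫ x, (1 - exp (-l * x)) ∂ρ :=
        mul_meas_ge_le_integral_of_nonneg
          (ae_of_all _ fun x => sub_nonneg.2 (exp_neg_mul_le_one hl x))
          ((integrable_const 1).sub hint) _
    _ = ρ.real univ - ∫ x, exp (-l * x) ∂ρ := by
        rw [integral_sub (integrable_const 1) hint]
        simp

variable {μ : ℕ → Measure ℝ≥0} [∀ n, IsFiniteMeasure (μ n)] {L : ℝ → ℝ}

lemma exists_isCompact_measureReal_compl_le_of_tendsto_laplace
    (hL : ContinuousWithinAt L (Ioi 0) 0)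
    (h : ∀ l : ℝ, 0 ≤ l → Tendsto (fun n => ∫ x, exp (-l * x) ∂μ n) atTop (𝓝 (L l)))
    {ε : ℝ} (hε : 0 < ε) :
    ∃ K : Set ℝ≥0, IsCompact K ∧ ∀ᶠ n in atTop, (μ n).real Kᶜ ≤ ε := by
  obtain ⟨l, hLl, hl⟩ : ∃ l, L l ∈ Metric.ball (L 0) (ε / 4) ∧ 0 < l :=
    ((hL.tendsto.eventually (Metric.ball_mem_nhds _ (by positivity))).and
      self_mem_nhdsWithin).exists
  have hmass : Tendsto (fun n => (μ n).real univ) atTop (𝓝 (L 0)) := by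
    simpa using h 0 le_rfl
  have hlim : L 0 - L l < ε / 2 := by
    rw [Metric.mem_ball, Real.dist_eq, abs_lt] at hLl
    linarith
  set R : ℝ≥0 := (1 / l).toNNReal
  have hR : exp (-l * R) ≤ 1 / 2 := by
    rw [Real.coe_toNNReal _ (by positivity), neg_mul, mul_one_div_cancel hl.ne', exp_neg,
      inv_le_comm₀ (exp_pos 1) (by norm_num)]
    linarith [add_one_le_exp (1 : ℝ)]
  refine ⟨Iic R, Icc_bot (a := R) ▸ isCompact_Icc, ?_⟩
  filter_upwards [(hmass.sub (h l hl.le)).eventually (eventually_lt_nhds hlim)] with n hn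
  rw [compl_Iic]
  nlinarith [mul_measureReal_Ioi_le (μ n) hl.le R, measureReal_nonneg (μ := μ n) (s := Ioi R)]

lemma exists_tendsto_integral_of_tendsto_laplace
    (h : ∀ k : ℕ, ∃ m, Tendsto (fun n => ∫ x, exp (-k * x) ∂μ n) atTop (𝓝 m))
    (f : C_c(ℝ≥0, ℝ)) : ∃ c, Tendsto (fun n => ∫ x, f x ∂μ n) atTop (𝓝 c) := by
  obtain ⟨g, hg, hgf⟩ := exists_continuous_comp_exp_neg_eq f
  simp_rw [← hgf]
  refine exists_tendsto_integral_comp (a := 0) (b := 1) (by fun_prop)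
    (fun x => ⟨(exp_pos _).le, exp_le_one_iff.2 (by simp)⟩) (fun k => ?_) hg
  simpa [← exp_nat_mul] using h k

end Laplace

/-- If the Laplace transforms of a sequence of finite measures on `[0,∞)` converge pointwise
to a continuous function `L`, then there is a finite measure `ν` with Laplace transform `L`
to which the sequence converges weakly. -/
theorem laplace_convergence_gives_weak_convergence
    (μ : ℕ → Measure NNReal) [∀ n, IsFiniteMeasure (μ n)]
    (L : ℝ → ℝ) (hL : ContinuousOn L (Set.Ici 0))
    (h : ∀ l : ℝ, 0 ≤ l →
      Tendsto (fun n => ∫ x, Real.exp (-l * (x : ℝ)) ∂(μ n)) atTop (nhds (L l))) :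
    ∃ ν : Measure NNReal, IsFiniteMeasure ν ∧
      (∀ l : ℝ, 0 ≤ l → ∫ x, Real.exp (-l * (x : ℝ)) ∂ν = L l) ∧
      (∀ f : BoundedContinuousFunction NNReal ℝ,
        Tendsto (fun n => ∫ x, f x ∂(μ n)) atTop (nhds (∫ x, f x ∂ν))) := by
  have hmass : Tendsto (fun n => (μ n).real univ) atTop (𝓝 (L 0)) := by
    simpa using h 0 le_rfl
  have htight := fun ε (hε : 0 < ε) => exists_isCompact_measureReal_compl_le_of_tendsto_laplace
    ((hL 0 self_mem_Ici).mono Ioi_subset_Ici_self) h hε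
  obtain ⟨ν, hνreg, hvague⟩ := exists_tendstoVaguely_of_forall_exists_tendsto
    (exists_tendsto_integral_of_tendsto_laplace fun k => ⟨_, h k k.cast_nonneg⟩)
  obtain ⟨hνfin, hνmass⟩ := hvague.isFiniteMeasure_and_measureReal_univ_eq htight hmass
  have hweak := hvague.tendsto_integral_of_tight htight (hνmass ▸ hmass)
  refine ⟨ν, hνfin, fun l hl => ?_, hweak⟩
  let e : ℝ≥0 →ᵇ ℝ := .ofNormedAddCommGroup (fun x => exp (-l * x)) (by fun_prop) 1 fun x => by
    rw [norm_of_nonneg (exp_pos _).le]; exact exp_neg_mul_le_one hl x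
  exact tendsto_nhds_unique (hweak e) (h l hl)
end

section
/- For every 0 < α < 1 and λ ≥ 0, one has λ^{1+α} = (α(1+α)/Γ(1-α)) · ∫_0^∞ (e^{-λu} - 1 + λu) u^{-2-α} du. -/
/-!
Substituting `u = v / λ` reduces the claim to `λ = 1`. Two integrations by parts against the
power weight, each lowering its exponent by one, then give
`∫ (e^{-v} - 1 + v) v^{-2-α} dv = (1+α)⁻¹ ∫ (1 - e^{-v}) v^{-1-α} dv`
`= (α(1+α))⁻¹ ∫ e^{-v} v^{-α} dv = Γ(1-α) / (α(1+α))`.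
The boundary terms vanish and all integrals converge because `0 ≤ e^{-v} - 1 + v ≤ min(v, v²)`
and `0 ≤ 1 - e^{-v} ≤ min(1, v)`.
-/

open Real MeasureTheory Set Filter Topology

lemma norm_mul_rpow_le {y x a c C : ℝ} (hx : 0 < x) (h : ‖y‖ ≤ C * x ^ a) :
    ‖y * x ^ c‖ ≤ C * x ^ (a + c) := by
  rw [norm_mul, norm_of_nonneg (rpow_nonneg hx.le _), rpow_add hx, ← mul_assoc]
  exact mul_le_mul_of_nonneg_right h (rpow_nonneg hx.le _)

section PowerWeight

variable {φ : ℝ → ℝ} {a b s C : ℝ}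

lemma integrableOn_Ioi_mul_rpow_of_le (hbs : b < s) (hsa : s < a)
    (hφ : ContinuousOn φ (Ioi 0)) (hφa : ∀ x ∈ Ioi (0 : ℝ), ‖φ x‖ ≤ C * x ^ a)
    (hφb : ∀ x ∈ Ioi (0 : ℝ), ‖φ x‖ ≤ C * x ^ b) :
    IntegrableOn (fun x ↦ φ x * x ^ (-s - 1)) (Ioi 0) := by
  have hcont : ContinuousOn (fun x ↦ φ x * x ^ (-s - 1)) (Ioi 0) :=
    hφ.mul fun x hx ↦ (continuousAt_rpow_const x _ (Or.inl hx.ne')).continuousWithinAt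
  rw [← Ioc_union_Ioi_eq_Ioi zero_le_one]
  refine IntegrableOn.union ?_ ?_
  · have hg : IntegrableOn (fun x : ℝ ↦ C * x ^ (a + (-s - 1))) (Ioc 0 1) := by
      rw [integrableOn_Ioc_iff_integrableOn_Ioo]
      exact ((intervalIntegral.integrableOn_Ioo_rpow_iff one_pos).mpr (by linarith)).const_mul C
    refine hg.mono' ((hcont.mono Ioc_subset_Ioi_self).aestronglyMeasurable measurableSet_Ioc) ?_
    filter_upwards [self_mem_ae_restrict measurableSet_Ioc] with x hx
    exact norm_mul_rpow_le hx.1 (hφa x hx.1)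
  · have hg : IntegrableOn (fun x : ℝ ↦ C * x ^ (b + (-s - 1))) (Ioi 1) :=
      (integrableOn_Ioi_rpow_of_lt (by linarith) one_pos).const_mul C
    refine hg.mono' ((hcont.mono (Ioi_subset_Ioi zero_le_one)).aestronglyMeasurable
      measurableSet_Ioi) ?_
    filter_upwards [self_mem_ae_restrict measurableSet_Ioi] with x hx
    have hx0 : x ∈ Ioi (0 : ℝ) := mem_Ioi.mpr (zero_lt_one.trans hx)
    exact norm_mul_rpow_le hx0 (hφb x hx0)

lemma tendsto_mul_rpow_neg_nhdsGT_zero (hsa : s < a)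
    (hφa : ∀ x ∈ Ioi (0 : ℝ), ‖φ x‖ ≤ C * x ^ a) :
    Tendsto (fun x ↦ φ x * x ^ (-s)) (𝓝[>] 0) (𝓝 0) := by
  have hpos : 0 < a + -s := by linarith
  have hlim : Tendsto (fun x : ℝ ↦ C * x ^ (a + -s)) (𝓝[>] 0) (𝓝 0) := by
    simpa [zero_rpow hpos.ne'] using
      ((continuousAt_rpow_const 0 _ (Or.inr hpos.le)).tendsto.mono_left
        nhdsWithin_le_nhds).const_mul C
  refine squeeze_zero_norm' ?_ hlim
  filter_upwards [self_mem_nhdsWithin] with x hx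
  exact norm_mul_rpow_le hx (hφa x hx)

lemma tendsto_mul_rpow_neg_atTop (hbs : b < s)
    (hφb : ∀ x ∈ Ioi (0 : ℝ), ‖φ x‖ ≤ C * x ^ b) :
    Tendsto (fun x ↦ φ x * x ^ (-s)) atTop (𝓝 0) := by
  have hlim : Tendsto (fun x : ℝ ↦ C * x ^ (b + -s)) atTop (𝓝 0) := by
    simpa [show b + -s = -(s - b) by ring] using
      (tendsto_rpow_neg_atTop (sub_pos.mpr hbs)).const_mul C
  refine squeeze_zero_norm' ?_ hlim
  filter_upwards [eventually_gt_atTop 0] with x hx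
  exact norm_mul_rpow_le hx (hφb x hx)

theorem integral_Ioi_mul_rpow_neg_sub_one (hbs : b < s) (hsa : s < a) (hs : s ≠ 0)
    {φ' : ℝ → ℝ} (hφ : ∀ x ∈ Ioi (0 : ℝ), HasDerivAt φ (φ' x) x)
    (hφa : ∀ x ∈ Ioi (0 : ℝ), ‖φ x‖ ≤ C * x ^ a) (hφb : ∀ x ∈ Ioi (0 : ℝ), ‖φ x‖ ≤ C * x ^ b)
    (hφ' : IntegrableOn (fun x ↦ φ' x * x ^ (-s)) (Ioi 0)) :
    ∫ x in Ioi 0, φ x * x ^ (-s - 1) = s⁻¹ * ∫ x in Ioi 0, φ' x * x ^ (-s) := by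
  have hv : ∀ x ∈ Ioi (0 : ℝ), HasDerivAt (fun x ↦ -s⁻¹ * x ^ (-s)) (x ^ (-s - 1)) x := by
    intro x hx
    refine ((hasDerivAt_rpow_const (p := -s) (Or.inl hx.ne')).const_mul (-s⁻¹)).congr_deriv ?_
    field_simp
  have hcont : ContinuousOn φ (Ioi 0) := fun x hx ↦ (hφ x hx).continuousAt.continuousWithinAt
  have hboundary : ∀ l : Filter ℝ, Tendsto (fun x ↦ φ x * x ^ (-s)) l (𝓝 0) →
      Tendsto (φ * fun x ↦ -s⁻¹ * x ^ (-s)) l (𝓝 0) := fun l h ↦ by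
    simpa [Pi.mul_def, mul_left_comm] using h.const_mul (-s⁻¹)
  rw [integral_Ioi_mul_deriv_eq_deriv_mul hφ hv
    (integrableOn_Ioi_mul_rpow_of_le hbs hsa hcont hφa hφb)
    (IntegrableOn.congr_fun (hφ'.const_mul (-s⁻¹)) (fun x _ ↦ by simp only [Pi.mul_apply]; ring)
      measurableSet_Ioi)
    (hboundary _ (tendsto_mul_rpow_neg_nhdsGT_zero hsa hφa))
    (hboundary _ (tendsto_mul_rpow_neg_atTop hbs hφb))]
  simp_rw [mul_left_comm _ (-s⁻¹), integral_const_mul]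
  ring

end PowerWeight

section ExpNeg

variable {x : ℝ}

lemma abs_one_sub_exp_neg_le (hx : 0 ≤ x) : |1 - exp (-x)| ≤ x := by
  rw [abs_of_nonneg (sub_nonneg.mpr (exp_le_one_iff.mpr (neg_nonpos.mpr hx)))]
  linarith [one_sub_le_exp_neg x]

lemma abs_one_sub_exp_neg_le_one (hx : 0 ≤ x) : |1 - exp (-x)| ≤ 1 := by
  rw [abs_of_nonneg (sub_nonneg.mpr (exp_le_one_iff.mpr (neg_nonpos.mpr hx)))]
  linarith [exp_pos (-x)]

lemma abs_exp_neg_sub_one_add_le (hx : 0 ≤ x) : |exp (-x) - 1 + x| ≤ x := by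
  rw [abs_of_nonneg (by linarith [one_sub_le_exp_neg x])]
  linarith [exp_le_one_iff.mpr (neg_nonpos.mpr hx)]

lemma abs_exp_neg_sub_one_add_le_sq (hx : 0 ≤ x) : |exp (-x) - 1 + x| ≤ x ^ 2 := by
  rcases le_total x 1 with hx1 | hx1
  · simpa [sub_neg_eq_add] using
      abs_exp_sub_one_sub_id_le (x := -x) (by rwa [abs_neg, abs_of_nonneg hx])
  · nlinarith [abs_exp_neg_sub_one_add_le hx]

end ExpNeg

theorem integral_exp_neg_sub_one_add_mul_rpow {α : ℝ} (hα0 : 0 < α) (hα1 : α < 1) :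
    ∫ x in Ioi 0, (exp (-x) - 1 + x) * x ^ (-2 - α) = Gamma (1 - α) / (α * (1 + α)) := by
  have hderiv_sub : ∀ x : ℝ, HasDerivAt (fun x ↦ exp (-x) - 1 + x) (1 - exp (-x)) x := fun x ↦
    ((((hasDerivAt_neg x).exp).sub_const 1).add (hasDerivAt_id' x)).congr_deriv (by ring)
  have hderiv_exp : ∀ x : ℝ, HasDerivAt (fun x ↦ 1 - exp (-x)) (exp (-x)) x := fun x ↦ by
    simpa using ((hasDerivAt_neg x).exp).const_sub 1
  have hGamma : ∫ x in Ioi 0, exp (-x) * x ^ (-α) = Gamma (1 - α) := by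
    rw [Gamma_eq_integral (by linarith), sub_sub_cancel_left]
  have hexp_le : ∀ x ∈ Ioi (0 : ℝ), ‖1 - exp (-x)‖ ≤ 1 * x ^ (1 : ℝ) := fun x hx ↦ by
    simpa using abs_one_sub_exp_neg_le (le_of_lt hx)
  have hexp_le_one : ∀ x ∈ Ioi (0 : ℝ), ‖1 - exp (-x)‖ ≤ 1 * x ^ (0 : ℝ) := fun x hx ↦ by
    simpa using abs_one_sub_exp_neg_le_one (le_of_lt hx)
  have hsub_le_sq : ∀ x ∈ Ioi (0 : ℝ), ‖exp (-x) - 1 + x‖ ≤ 1 * x ^ (2 : ℝ) := fun x hx ↦ by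
    simpa using abs_exp_neg_sub_one_add_le_sq (le_of_lt hx)
  have hsub_le : ∀ x ∈ Ioi (0 : ℝ), ‖exp (-x) - 1 + x‖ ≤ 1 * x ^ (1 : ℝ) := fun x hx ↦ by
    simpa using abs_exp_neg_sub_one_add_le (le_of_lt hx)
  have hinner := integral_Ioi_mul_rpow_neg_sub_one (by linarith) hα1 hα0.ne'
    (fun x _ ↦ hderiv_exp x) hexp_le hexp_le_one
    (by simpa using GammaIntegral_convergent (s := 1 - α) (by linarith))
  have houter := integral_Ioi_mul_rpow_neg_sub_one (by linarith : (1 : ℝ) < 1 + α)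
    (by linarith : 1 + α < 2) (by positivity) (fun x _ ↦ hderiv_sub x) hsub_le_sq hsub_le (by
      rw [show -(1 + α) = -α - 1 by ring]
      exact integrableOn_Ioi_mul_rpow_of_le (by linarith) hα1
        (fun x _ ↦ (hderiv_exp x).continuousAt.continuousWithinAt) hexp_le hexp_le_one)
  rw [show -(1 + α) - 1 = -2 - α by ring, show -(1 + α) = -α - 1 by ring, hinner, hGamma]
    at houter
  rw [houter]
  field_simp

theorem integral_comp_mul_left_mul_rpow_Ioi (g : ℝ → ℝ) (r : ℝ) {l : ℝ} (hl : 0 < l) :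
    ∫ x in Ioi 0, g (l * x) * x ^ r = l ^ (-r - 1) * ∫ x in Ioi 0, g x * x ^ r := by
  have hpow : ∀ x ∈ Ioi (0 : ℝ), g (l * x) * x ^ r = l ^ (-r) * (g (l * x) * (l * x) ^ r) :=
    fun x hx ↦ by
      rw [mul_rpow hl.le (le_of_lt hx), rpow_neg hl.le]
      field_simp
  rw [setIntegral_congr_fun measurableSet_Ioi hpow, integral_const_mul,
    integral_comp_mul_left_Ioi (fun x ↦ g x * x ^ r) 0 hl, mul_zero, smul_eq_mul, ← mul_assoc,
    rpow_sub hl, rpow_one, div_eq_mul_inv]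

/-- The stable branching mechanism representation:
`λ^{1+α} = (α(1+α)/Γ(1-α)) ∫_0^∞ (e^{-λu} - 1 + λu) u^{-2-α} du` for `0 < α < 1`, `λ ≥ 0`. -/
theorem stable_branching_mechanism_representation
    (α : ℝ) (hα1 : 0 < α) (hα2 : α < 1) (l : ℝ) (hl : 0 ≤ l) :
    l ^ (1 + α) = (α * (1 + α) / Real.Gamma (1 - α)) *
      ∫ u in Set.Ioi (0 : ℝ), (Real.exp (-l * u) - 1 + l * u) * u ^ (-2 - α) := by
  rcases hl.eq_or_lt with rfl | hl
  · simp [zero_rpow (by linarith : 1 + α ≠ 0)]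
  have hGamma : Gamma (1 - α) ≠ 0 := (Gamma_pos_of_pos (by linarith)).ne'
  simp_rw [neg_mul]
  rw [integral_comp_mul_left_mul_rpow_Ioi (fun x ↦ exp (-x) - 1 + x) _ hl,
    integral_exp_neg_sub_one_add_mul_rpow hα1 hα2, show -(-2 - α) - 1 = 1 + α by ring]
  field_simp
end

section
/- Let c > 0, 0 < α ≤ 1 and b ∈ ℝ, and let φ(z) = c z^{1+α} + b z. For λ ≥ 0, the unique solution t ↦ v_t(λ) of the ODE ∂_t v_t(λ) = -φ(v_t(λ)) with v_0(λ) = λ is given by v_t(λ) = e^{-bt} λ / (1 + c q_α^b(t) λ^α)^{1/α}, where q_α^b(t) = b^{-1}(1 - e^{-αbt}) if b ≠ 0 and q_α^0(t) = αt. -/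
open Set

/-!
Differentiating the explicit formula shows that it solves the ODE: with
`G = 1 + c q l^α` one has `G' = c α e^{-αbt} l^α`, and `w^α = e^{-αbt} l^α / G`, so the
derivative of `G^{-1/α}` produces exactly the term `-c w^{1+α}`. For uniqueness, the real power
`z ↦ z^{1+α}` is `C¹` because `1 + α ≥ 1`, so the vector field is locally Lipschitz and
Grönwall-type uniqueness applies on every compact time interval.
-/

theorem ODE_solution_unique_Ici_of_locallyLipschitz {E : Type*} [NormedAddCommGroup E]
    [NormedSpace ℝ E] {F : E → E} (hF : LocallyLipschitz F) {f g : ℝ → E} {t₀ : ℝ}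
    (hf : ∀ t ∈ Ici t₀, HasDerivWithinAt f (F (f t)) (Ici t₀) t)
    (hg : ∀ t ∈ Ici t₀, HasDerivWithinAt g (F (g t)) (Ici t₀) t) (h₀ : f t₀ = g t₀) :
    EqOn f g (Ici t₀) := by
  intro t ht
  have hfc : ContinuousOn f (Icc t₀ t) := fun s hs =>
    (hf s hs.1).continuousWithinAt.mono Icc_subset_Ici_self
  have hgc : ContinuousOn g (Icc t₀ t) := fun s hs =>
    (hg s hs.1).continuousWithinAt.mono Icc_subset_Ici_self
  -- Both trajectories stay in a compact set on `[t₀, t]`, where `F` is Lipschitz.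
  set K := f '' Icc t₀ t ∪ g '' Icc t₀ t
  obtain ⟨L, hL⟩ := (hF.locallyLipschitzOn (s := K)).exists_lipschitzOnWith_of_compact
    ((isCompact_Icc.image_of_continuousOn hfc).union (isCompact_Icc.image_of_continuousOn hgc))
  refine ODE_solution_unique_of_mem_Icc_right (v := fun _ => F) (s := fun _ => K) (fun _ _ => hL)
    hfc (fun s hs => (hf s hs.1).mono (Ici_subset_Ici.mpr hs.1))
    (fun s hs => Or.inl (mem_image_of_mem f (Ico_subset_Icc_self hs))) hgc
    (fun s hs => (hg s hs.1).mono (Ici_subset_Ici.mpr hs.1))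
    (fun s hs => Or.inr (mem_image_of_mem g (Ico_subset_Icc_self hs))) h₀ ⟨ht, le_rfl⟩

theorem locallyLipschitz_neg_stableMechanism (c b : ℝ) {α : ℝ} (hα : 0 ≤ α) :
    LocallyLipschitz fun z : ℝ => -(c * z ^ (1 + α) + b * z) := by
  have hpow : ContDiff ℝ 1 fun z : ℝ => z ^ (1 + α) :=
    Real.contDiff_rpow_const_of_le (n := 1) (by simpa using hα)
  exact ((contDiff_const.mul hpow).add (contDiff_const.mul contDiff_id)).neg.locallyLipschitz

noncomputable def stableQ (α b t : ℝ) : ℝ :=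
  if b = 0 then α * t else b⁻¹ * (1 - Real.exp (-α * b * t))

theorem hasDerivAt_stableQ (α b t : ℝ) :
    HasDerivAt (stableQ α b) (α * Real.exp (-α * b * t)) t := by
  unfold stableQ
  rcases eq_or_ne b 0 with rfl | hb
  · simpa using (hasDerivAt_id t).const_mul α
  · simp only [hb, if_false]
    refine ((((hasDerivAt_id t).const_mul (-α * b)).exp.const_sub 1).const_mul b⁻¹).congr_deriv
      ?_
    field_simp
    simp

theorem stableQ_zero (α b : ℝ) : stableQ α b 0 = 0 := by
  simp [stableQ]

theorem stableQ_nonneg {α : ℝ} (hα : 0 ≤ α) (b : ℝ) {t : ℝ} (ht : 0 ≤ t) :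
    0 ≤ stableQ α b t := by
  have hmono : Monotone (stableQ α b) :=
    monotone_of_hasDerivAt_nonneg (hasDerivAt_stableQ α b) fun s => by positivity
  simpa [stableQ_zero] using hmono ht

noncomputable def stableCumulant (c α b l t : ℝ) : ℝ :=
  Real.exp (-b * t) * l / (1 + c * stableQ α b t * l ^ α) ^ (1 / α)

theorem stableCumulant_zero (c α b l : ℝ) : stableCumulant c α b l 0 = l := by
  simp [stableCumulant, stableQ_zero]

theorem stableCumulant_rpow {c α b l t : ℝ} (hα : α ≠ 0) (hl : 0 ≤ l)
    (hG : 0 < 1 + c * stableQ α b t * l ^ α) :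
    stableCumulant c α b l t ^ α =
      Real.exp (-α * b * t) * l ^ α / (1 + c * stableQ α b t * l ^ α) := by
  rw [stableCumulant, Real.div_rpow (by positivity) (by positivity),
    Real.mul_rpow (by positivity) hl,
    ← Real.exp_mul, ← Real.rpow_mul hG.le, one_div_mul_cancel hα, Real.rpow_one]
  ring_nf

theorem hasDerivAt_stableCumulant {c α b l t : ℝ} (hα : 0 < α) (hl : 0 ≤ l)
    (hG : 0 < 1 + c * stableQ α b t * l ^ α) :
    HasDerivAt (stableCumulant c α b l)
      (-(c * stableCumulant c α b l t ^ (1 + α) + b * stableCumulant c α b l t)) t := by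
  have hN : HasDerivAt (fun s => Real.exp (-b * s) * l) (Real.exp (-b * t) * (-b) * l) t := by
    simpa using (((hasDerivAt_id t).const_mul (-b)).exp.mul_const l)
  have hD := ((((hasDerivAt_stableQ α b t).const_mul c).mul_const (l ^ α)).const_add 1
    ).rpow_const (p := 1 / α) (Or.inl hG.ne')
  have hDpos : 0 < (1 + c * stableQ α b t * l ^ α) ^ (1 / α) := by positivity
  refine (hN.div hD hDpos.ne').congr_deriv ?_
  have hw : 0 ≤ stableCumulant c α b l t := by unfold stableCumulant; positivity
  rw [Real.rpow_one_add' hw (by positivity), stableCumulant_rpow hα.ne' hl hG,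
    Real.rpow_sub_one hG.ne', stableCumulant]
  field_simp
  ring

theorem stable_cumulant_explicit_solution_general
    (c : ℝ) (hc : 0 < c) (α : ℝ) (hα1 : 0 < α)
    (b l : ℝ) (hl : 0 ≤ l)
    (q : ℝ → ℝ) (hq : ∀ t, q t = if b = 0 then α * t else b⁻¹ * (1 - Real.exp (-α * b * t)))
    (w : ℝ → ℝ)
    (hw : ∀ t, w t = Real.exp (-b * t) * l / (1 + c * q t * l ^ α) ^ (1 / α)) :
    (w 0 = l ∧
      ∀ t, 0 ≤ t → HasDerivWithinAt w (-(c * (w t) ^ (1 + α) + b * w t)) (Ici 0) t) ∧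
    (∀ v : ℝ → ℝ, v 0 = l → (∀ t, 0 ≤ t → 0 ≤ v t) →
      (∀ t, 0 ≤ t → HasDerivWithinAt v (-(c * (v t) ^ (1 + α) + b * v t)) (Ici 0) t) →
      ∀ t, 0 ≤ t → v t = w t) := by
  obtain rfl : q = stableQ α b := funext hq
  obtain rfl : w = stableCumulant c α b l := funext hw
  have hw' : ∀ t ∈ Ici (0 : ℝ), HasDerivWithinAt (stableCumulant c α b l)
      (-(c * stableCumulant c α b l t ^ (1 + α) + b * stableCumulant c α b l t)) (Ici 0) t :=
    fun t ht => (hasDerivAt_stableCumulant hα1 hl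
      (by have := stableQ_nonneg hα1.le b ht; positivity)).hasDerivWithinAt
  refine ⟨⟨stableCumulant_zero c α b l, hw'⟩, fun v hv₀ _ hv t ht => ?_⟩
  exact ODE_solution_unique_Ici_of_locallyLipschitz
    (locallyLipschitz_neg_stableMechanism c b hα1.le) hv hw'
    (by rw [hv₀, stableCumulant_zero]) ht

/-- Explicit solution of the cumulant ODE for the stable branching mechanism
`φ(z) = c z^{1+α} + b z`. -/
theorem stable_cumulant_explicit_solution
    (c : ℝ) (hc : 0 < c) (α : ℝ) (hα1 : 0 < α) (hα2 : α ≤ 1)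
    (b l : ℝ) (hl : 0 ≤ l)
    (q : ℝ → ℝ) (hq : ∀ t, q t = if b = 0 then α * t else b⁻¹ * (1 - Real.exp (-α * b * t)))
    (w : ℝ → ℝ)
    (hw : ∀ t, w t = Real.exp (-b * t) * l / (1 + c * q t * l ^ α) ^ (1 / α)) :
    (w 0 = l ∧
      ∀ t, 0 ≤ t → HasDerivWithinAt w (-(c * (w t) ^ (1 + α) + b * w t)) (Ici 0) t) ∧
    (∀ v : ℝ → ℝ, v 0 = l → (∀ t, 0 ≤ t → 0 ≤ v t) →
      (∀ t, 0 ≤ t → HasDerivWithinAt v (-(c * (v t) ^ (1 + α) + b * v t)) (Ici 0) t) →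
      ∀ t, 0 ≤ t → v t = w t) :=
  stable_cumulant_explicit_solution_general c hc α hα1 b l hl q hq w hw
end

section
/- Suppose Grey's condition holds for the branching mechanism φ: there is θ > 0 with φ(z) > 0 for z ≥ θ and ∫_θ^∞ φ(z)^{-1} dz < ∞. Then the map t ↦ v̄_t := lim_{λ→∞} v_t(λ) is finite for all t > 0, is the unique solution of the ODE d v̄_t / dt = -φ(v̄_t) on (0,∞) with singular initial condition v̄_{0+} = ∞, and satisfies ∫_{v̄_t}^∞ φ(z)^{-1} dz = t. -/
/-!
Let `q` be the largest zero of `φ` (it exists since `φ 0 = 0` and `φ > 0` on `[θ, ∞)`), and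
`G x = ∫_x^∞ dz / φ z` for `x > q`: it is strictly decreasing, `G' = -1/φ` and `G ∞ = 0`.
Since `φ` is locally Lipschitz on `[0, ∞)` and `q` is an equilibrium, a solution that starts
above `q` stays above `q`, and along it `G (v_t) - t` is constant. Hence
`G (v_t λ) = G λ + t`, so `G` maps `(q, ∞)` onto `(0, ∞)` and `v̄ := G⁻¹` satisfies
`v_t λ = v̄ (G λ + t) → v̄ t` and `v_r (v̄ s) = v̄ (s + r)`, which gives the ODE; `v̄ 0+ = ∞` is
clear. A solution `W` with `W 0+ = ∞` exceeds `q`, so `G (W t) = t + lim_{s→0} G (W s) = t`.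
-/

open MeasureTheory Set Filter
open scoped Topology

section BranchingMechanism

lemma mul_one_sub_exp_neg_le {B u z : ℝ} (hu : 0 < u) (hz : z ∈ Icc 0 B) :
    u * (1 - Real.exp (-z * u)) ≤ max 1 B * min u (u ^ 2) := by
  have hzu : 0 ≤ z * u := mul_nonneg hz.1 hu.le
  have hexp_le : Real.exp (-z * u) ≤ 1 := Real.exp_le_one_iff.2 (by nlinarith)
  have hexp_ge : 1 - z * u ≤ Real.exp (-z * u) := by
    have := Real.add_one_le_exp (-(z * u)); rw [neg_mul]; linarith
  rcases le_total u 1 with h | h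
  · have hzB : z ≤ max 1 B := hz.2.trans (le_max_right _ _)
    rw [min_eq_right (by nlinarith)]
    nlinarith
  · rw [min_eq_left (by nlinarith)]
    have h1B : (1 : ℝ) ≤ max 1 B := le_max_left 1 B
    have : u * (1 - Real.exp (-z * u)) ≤ u := by nlinarith [Real.exp_pos (-z * u)]
    nlinarith

lemma abs_levyIntegrand_sub_le {B u z₁ z₂ : ℝ} (hu : 0 < u) (h₁ : z₁ ∈ Icc 0 B)
    (h₂ : z₂ ∈ Icc 0 B) :
    |(Real.exp (-z₁ * u) - 1 + z₁ * u) - (Real.exp (-z₂ * u) - 1 + z₂ * u)| ≤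
      max 1 B * min u (u ^ 2) * |z₁ - z₂| := by
  have hderiv : ∀ z ∈ Icc 0 B, HasDerivWithinAt (fun z => Real.exp (-z * u) + z * u)
      (u * (1 - Real.exp (-z * u))) (Icc 0 B) z := fun z _ => by
    have := (((hasDerivAt_neg' z).mul_const u).exp).add ((hasDerivAt_id' z).mul_const u)
    exact (this.congr_deriv (by ring)).hasDerivWithinAt
  have hbound : ∀ z ∈ Icc 0 B, ‖u * (1 - Real.exp (-z * u))‖ ≤ max 1 B * min u (u ^ 2) :=
    fun z hz => by
      have : Real.exp (-z * u) ≤ 1 := Real.exp_le_one_iff.2 (by nlinarith [hz.1])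
      rw [Real.norm_eq_abs, abs_of_nonneg (by nlinarith)]
      exact mul_one_sub_exp_neg_le hu hz
  have := (convex_Icc 0 B).norm_image_sub_le_of_norm_hasDerivWithin_le hderiv hbound h₂ h₁
  simp only [Real.norm_eq_abs] at this
  convert this using 2
  ring

variable {m : Measure ℝ}

lemma integrableOn_min_sq
    (hm : ∫⁻ u in Ioi (0 : ℝ), ENNReal.ofReal (min u (u ^ 2)) ∂m ≠ ⊤) :
    IntegrableOn (fun u => min u (u ^ 2)) (Ioi 0) m := by
  refine ⟨(continuous_id.min (continuous_pow 2)).aestronglyMeasurable, ?_⟩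
  rw [hasFiniteIntegral_iff_ofReal]
  · exact hm.lt_top
  · filter_upwards [self_mem_ae_restrict measurableSet_Ioi] with u (hu : 0 < u)
    exact le_min hu.le (by positivity)

lemma integrableOn_levyIntegrand
    (hm : ∫⁻ u in Ioi (0 : ℝ), ENNReal.ofReal (min u (u ^ 2)) ∂m ≠ ⊤) {z : ℝ} (hz : 0 ≤ z) :
    IntegrableOn (fun u => Real.exp (-z * u) - 1 + z * u) (Ioi 0) m := by
  refine ((integrableOn_min_sq hm).const_mul (max 1 z * z)).mono' (by fun_prop) ?_
  filter_upwards [self_mem_ae_restrict measurableSet_Ioi] with u (hu : 0 < u)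
  have := abs_levyIntegrand_sub_le hu ⟨hz, le_rfl⟩ ⟨le_rfl, hz⟩
  simp only [neg_zero, zero_mul, Real.exp_zero, sub_self, add_zero, sub_zero,
    abs_of_nonneg hz] at this
  rw [Real.norm_eq_abs]
  linarith

lemma lipschitzOnWith_levyIntegral
    (hm : ∫⁻ u in Ioi (0 : ℝ), ENNReal.ofReal (min u (u ^ 2)) ∂m ≠ ⊤) (B : ℝ) :
    LipschitzOnWith (max 1 B * ∫ u in Ioi (0 : ℝ), min u (u ^ 2) ∂m).toNNReal
      (fun z => ∫ u in Ioi (0 : ℝ), (Real.exp (-z * u) - 1 + z * u) ∂m) (Icc 0 B) := by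
  refine LipschitzOnWith.of_dist_le_mul fun z₁ h₁ z₂ h₂ => ?_
  have hM : 0 ≤ ∫ u in Ioi (0 : ℝ), min u (u ^ 2) ∂m :=
    setIntegral_nonneg measurableSet_Ioi fun u (hu : 0 < u) => le_min hu.le (by positivity)
  rw [Real.coe_toNNReal _ (by positivity), Real.dist_eq, Real.dist_eq,
    ← integral_sub (integrableOn_levyIntegrand hm h₁.1) (integrableOn_levyIntegrand hm h₂.1),
    ← Real.norm_eq_abs]
  calc _ ≤ ∫ u in Ioi (0 : ℝ), max 1 B * |z₁ - z₂| * min u (u ^ 2) ∂m := by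
        refine norm_integral_le_of_norm_le ((integrableOn_min_sq hm).const_mul _) ?_
        filter_upwards [self_mem_ae_restrict measurableSet_Ioi] with u (hu : 0 < u)
        rw [Real.norm_eq_abs, mul_right_comm]
        exact abs_levyIntegrand_sub_le hu h₁ h₂
    _ = _ := by rw [integral_const_mul]; ring

lemma locallyLipschitzOn_branching {b c : ℝ}
    (hm : ∫⁻ u in Ioi (0 : ℝ), ENNReal.ofReal (min u (u ^ 2)) ∂m ≠ ⊤) {φ : ℝ → ℝ}
    (hφ : ∀ z : ℝ, φ z =
      b * z + c * z ^ 2 + ∫ u in Ioi (0 : ℝ), (Real.exp (-z * u) - 1 + z * u) ∂m) :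
    LocallyLipschitzOn (Ici 0) φ := by
  rw [show φ = fun z => (b * z + c * z ^ 2) +
      ∫ u in Ioi (0 : ℝ), (Real.exp (-z * u) - 1 + z * u) ∂m from funext hφ]
  have hpoly : ContDiff ℝ 1 fun z : ℝ => b * z + c * z ^ 2 := by fun_prop
  refine hpoly.locallyLipschitz.locallyLipschitzOn.add
    fun x hx => ⟨_, Icc 0 (x + 1), ?_, lipschitzOnWith_levyIntegral hm (x + 1)⟩
  rw [← Ici_inter_Iic]
  exact inter_mem_nhdsWithin _ (Iic_mem_nhds (by linarith))

end BranchingMechanism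

lemma exists_greatest_zero {φ : ℝ → ℝ} {θ : ℝ} (hcont : ContinuousOn φ (Ici 0)) (hφ0 : φ 0 = 0)
    (hφθ : ∀ z, θ ≤ z → 0 < φ z) :
    ∃ q, 0 ≤ q ∧ φ q = 0 ∧ ∀ z, q < z → 0 < φ z := by
  have hθ : 0 ≤ θ := by
    by_contra! h
    exact (hφθ 0 h.le).ne' hφ0
  set S := Icc 0 θ ∩ φ ⁻¹' Iic 0
  have hS : IsCompact S := isCompact_Icc.of_isClosed_subset
    ((hcont.mono Icc_subset_Ici_self).preimage_isClosed_of_isClosed isClosed_Icc isClosed_Iic)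
    inter_subset_left
  obtain ⟨q, ⟨⟨hq0, -⟩, hφq⟩, hqmax⟩ := hS.exists_isGreatest ⟨0, ⟨le_rfl, hθ⟩, hφ0.le⟩
  have hpos : ∀ z, q < z → 0 < φ z := fun z hqz => by
    by_contra! hz
    rcases le_total z θ with hzθ | hθz
    · exact hqz.not_ge (hqmax ⟨⟨hq0.trans hqz.le, hzθ⟩, hz⟩)
    · exact (hφθ z hθz).not_ge hz
  have hlim : Tendsto φ (𝓝[>] q) (𝓝 (φ q)) :=
    (hcont q hq0).mono fun z (hz : q < z) => hq0.trans hz.le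
  exact ⟨q, hq0, le_antisymm hφq (ge_of_tendsto hlim
    (eventually_nhdsWithin_of_forall fun z hz => (hpos z hz).le)), hpos⟩

lemma integrableOn_inv_Ioi_of_integrableOn_Ici {φ : ℝ → ℝ} {q θ a : ℝ}
    (hcont : ContinuousOn φ (Ioi q)) (hφpos : ∀ z, q < z → 0 < φ z)
    (hint : IntegrableOn (fun z => (φ z)⁻¹) (Ici θ)) (ha : q < a) :
    IntegrableOn (fun z => (φ z)⁻¹) (Ioi a) := by
  have hIcc : IntegrableOn (fun z => (φ z)⁻¹) (Icc a θ) :=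
    ((hcont.inv₀ fun z hz => (hφpos z hz).ne').mono
      fun z hz => ha.trans_le hz.1).integrableOn_Icc
  refine (hIcc.union hint).mono_set fun z (hz : a < z) => ?_
  rcases le_total z θ with h | h
  · exact Or.inl ⟨hz.le, h⟩
  · exact Or.inr h

noncomputable def invTailIntegral (φ : ℝ → ℝ) (x : ℝ) : ℝ := ∫ z in Ioi x, (φ z)⁻¹

section InvTailIntegral

variable {φ : ℝ → ℝ} {q : ℝ}
  (hint : ∀ a, q < a → IntegrableOn (fun z => (φ z)⁻¹) (Ioi a))
  (hφpos : ∀ z, q < z → 0 < φ z)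
include hint

lemma invTailIntegral_sub {a b : ℝ} (ha : q < a) (hb : q < b) :
    invTailIntegral φ a - invTailIntegral φ b = ∫ z in a..b, (φ z)⁻¹ :=
  intervalIntegral.integral_Ioi_sub_Ioi' (hint a ha) (hint b hb)

include hφpos in
lemma strictAntiOn_invTailIntegral : StrictAntiOn (invTailIntegral φ) (Ioi q) :=
  fun a (ha : q < a) b (hb : q < b) hab => by
    have hii : IntervalIntegrable (fun z => (φ z)⁻¹) volume a b :=
      (intervalIntegrable_iff_integrableOn_Ioc_of_le hab.le).2
        ((hint a ha).mono_set Ioc_subset_Ioi_self)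
    have := intervalIntegral.intervalIntegral_pos_of_pos_on hii
      (fun z hz => inv_pos.2 (hφpos z (ha.trans hz.1))) hab
    rw [← invTailIntegral_sub hint ha hb] at this
    linarith

lemma tendsto_invTailIntegral_atTop : Tendsto (invTailIntegral φ) atTop (𝓝 0) := by
  have hq : q < q + 1 := lt_add_one q
  have : Tendsto (fun x => invTailIntegral φ (q + 1) - ∫ z in (q + 1)..x, (φ z)⁻¹) atTop
      (𝓝 (invTailIntegral φ (q + 1) - invTailIntegral φ (q + 1))) :=
    (intervalIntegral_tendsto_integral_Ioi _ (hint _ hq) tendsto_id).const_sub _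
  rw [sub_self] at this
  refine this.congr' ?_
  filter_upwards [eventually_gt_atTop q] with x hx
  rw [← invTailIntegral_sub hint hq hx, sub_sub_cancel]

include hφpos in
lemma invTailIntegral_pos {x : ℝ} (hx : q < x) : 0 < invTailIntegral φ x := by
  have hnonneg : 0 ≤ invTailIntegral φ (x + 1) := setIntegral_nonneg measurableSet_Ioi
    fun z (hz : x + 1 < z) => (inv_pos.2 (hφpos z (by linarith))).le
  exact hnonneg.trans_lt <| strictAntiOn_invTailIntegral hint hφpos hx
    (show q < x + 1 by linarith) (lt_add_one x)

include hφpos in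
lemma hasDerivAt_invTailIntegral (hcont : ContinuousOn φ (Ioi q)) {x : ℝ} (hx : q < x) :
    HasDerivAt (invTailIntegral φ) (-(φ x)⁻¹) x := by
  have hcont' : ContinuousOn (fun z => (φ z)⁻¹) (Ioi q) :=
    hcont.inv₀ fun z hz => (hφpos z hz).ne'
  have hFTC := (intervalIntegral.integral_hasDerivAt_right (a := x) (b := x)
    IntervalIntegrable.refl (hcont'.stronglyMeasurableAtFilter isOpen_Ioi x hx)
    (hcont'.continuousAt (Ioi_mem_nhds hx))).const_sub (invTailIntegral φ x)
  refine hFTC.congr_of_eventuallyEq ?_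
  filter_upwards [Ioi_mem_nhds hx] with y hy
  rw [← invTailIntegral_sub hint hx hy, sub_sub_cancel]

end InvTailIntegral

section Solutions

variable {φ : ℝ → ℝ} {q : ℝ}

lemma lt_of_hasDerivAt_of_lt (hlip : LocallyLipschitzOn (Ici 0) φ) (hq : 0 ≤ q) (hφq : φ q = 0)
    {f : ℝ → ℝ} {a b : ℝ} (hab : a ≤ b) (hf : ContinuousOn f (Icc a b))
    (hf' : ∀ t ∈ Ioc a b, HasDerivAt f (-φ (f t)) t) (hf0 : MapsTo f (Icc a b) (Ici 0))
    (ha : q < f a) : q < f b := by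
  -- Otherwise `f` hits the equilibrium `q` at some `σ`, and backward uniqueness gives `f a = q`.
  by_contra! hb
  obtain ⟨σ, hσ, hfσ⟩ := intermediate_value_Icc' hab hf ⟨hb, ha.le⟩
  set s := insert q (f '' Icc a b)
  obtain ⟨K, hK⟩ := (hlip.mono (insert_subset hq hf0.image_subset)
    ).exists_lipschitzOnWith_of_compact ((isCompact_Icc.image_of_continuousOn hf).insert q)
  have hconst : ∀ t ∈ Ioc a σ, HasDerivWithinAt (fun _ => q) (-φ q) (Iic t) t := fun t _ => by
    rw [hφq, neg_zero]
    exact hasDerivWithinAt_const t _ q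
  have := ODE_solution_unique_of_mem_Icc_left (v := fun _ y => -φ y) (s := fun _ => s)
    (fun _ _ => hK.neg) (hf.mono (Icc_subset_Icc_right hσ.2))
    (fun t ht => (hf' t ⟨ht.1, ht.2.trans hσ.2⟩).hasDerivWithinAt)
    (fun t ht => mem_insert_of_mem _ (mem_image_of_mem _ ⟨ht.1.le, ht.2.trans hσ.2⟩))
    continuousOn_const hconst (fun _ _ => mem_insert _ _) hfσ
  exact ha.ne' (this ⟨le_rfl, hσ.1⟩)

lemma invTailIntegral_comp_eq (hint : ∀ a, q < a → IntegrableOn (fun z => (φ z)⁻¹) (Ioi a))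
    (hφpos : ∀ z, q < z → 0 < φ z) (hcont : ContinuousOn φ (Ioi q))
    {f : ℝ → ℝ} {a b : ℝ} (hab : a ≤ b) (hf : ContinuousOn f (Icc a b))
    (hf' : ∀ t ∈ Ico a b, HasDerivWithinAt f (-φ (f t)) (Ici t) t)
    (hfq : MapsTo f (Icc a b) (Ioi q)) :
    invTailIntegral φ (f b) = invTailIntegral φ (f a) + (b - a) := by
  have hG := fun t (ht : t ∈ Icc a b) => hasDerivAt_invTailIntegral hint hφpos hcont (hfq ht)
  have hcomp : ContinuousOn (fun t => invTailIntegral φ (f t) - t) (Icc a b) := fun t ht =>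
    ((hG t ht).continuousAt.comp_continuousWithinAt (hf t ht)).sub continuousWithinAt_id
  have hderiv : ∀ t ∈ Ico a b,
      HasDerivWithinAt (fun t => invTailIntegral φ (f t) - t) 0 (Ici t) t := fun t ht => by
    have := ((hG t (Ico_subset_Icc_self ht)).comp_hasDerivWithinAt t (hf' t ht)).sub
      (hasDerivWithinAt_id t _)
    rwa [neg_mul_neg, inv_mul_cancel₀ (hφpos _ (hfq (Ico_subset_Icc_self ht))).ne', sub_self]
      at this
  have := constant_of_has_deriv_right_zero hcomp hderiv b (right_mem_Icc.2 hab)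
  linarith

end Solutions

section SingularSolutions

variable {φ : ℝ → ℝ} {q : ℝ} {W : ℝ → ℝ}
  (hlip : LocallyLipschitzOn (Ici 0) φ) (hq : 0 ≤ q) (hφq : φ q = 0)
  (hW0 : ∀ t, 0 < t → 0 ≤ W t) (hW' : ∀ t, 0 < t → HasDerivAt W (-φ (W t)) t)
  (hW : Tendsto W (𝓝[>] 0) atTop)
include hlip hq hφq hW0 hW' hW

lemma lt_of_tendsto_atTop {t : ℝ} (ht : 0 < t) : q < W t := by
  obtain ⟨s, hsq, hs⟩ :=
    ((hW.eventually (eventually_gt_atTop q)).and (Ioo_mem_nhdsGT ht)).exists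
  exact lt_of_hasDerivAt_of_lt hlip hq hφq hs.2.le
    (fun τ hτ => (hW' τ (hs.1.trans_le hτ.1)).continuousAt.continuousWithinAt)
    (fun τ hτ => hW' τ (hs.1.trans hτ.1)) (fun τ hτ => hW0 τ (hs.1.trans_le hτ.1)) hsq

lemma invTailIntegral_eq_of_tendsto_atTop
    (hint : ∀ a, q < a → IntegrableOn (fun z => (φ z)⁻¹) (Ioi a))
    (hφpos : ∀ z, q < z → 0 < φ z) {t : ℝ} (ht : 0 < t) : invTailIntegral φ (W t) = t := by
  have hshift : ∀ s ∈ Ioo 0 t,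
      invTailIntegral φ (W t) = invTailIntegral φ (W s) + (t - s) := fun s hs =>
    invTailIntegral_comp_eq hint hφpos (hlip.continuousOn.mono (Ioi_subset_Ici hq)) hs.2.le
      (fun τ hτ => (hW' τ (hs.1.trans_le hτ.1)).continuousAt.continuousWithinAt)
      (fun τ hτ => (hW' τ (hs.1.trans_le hτ.1)).hasDerivWithinAt)
      (fun τ hτ => lt_of_tendsto_atTop hlip hq hφq hW0 hW' hW (hs.1.trans_le hτ.1))
  have hlim : Tendsto (fun s => invTailIntegral φ (W s) + (t - s)) (𝓝[>] 0) (𝓝 (0 + (t - 0))) :=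
    ((tendsto_invTailIntegral_atTop hint).comp hW).add
      ((tendsto_const_nhds.sub tendsto_id).mono_left nhdsWithin_le_nhds)
  rw [zero_add, sub_zero] at hlim
  refine tendsto_nhds_unique (tendsto_const_nhds.congr' ?_) hlim
  filter_upwards [Ioo_mem_nhdsGT ht] with s hs using hshift s hs

end SingularSolutions

noncomputable def vbar (φ : ℝ → ℝ) (q : ℝ) : ℝ → ℝ := Function.invFunOn (invTailIntegral φ) (Ioi q)

section Flow

variable {φ : ℝ → ℝ} {q : ℝ} {v : ℝ → ℝ → ℝ}
  (hlip : LocallyLipschitzOn (Ici 0) φ) (hq : 0 ≤ q) (hφq : φ q = 0)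
  (hint : ∀ a, q < a → IntegrableOn (fun z => (φ z)⁻¹) (Ioi a))
  (hφpos : ∀ z, q < z → 0 < φ z)
  (hv0 : ∀ l, 0 ≤ l → v 0 l = l)
  (hpos : ∀ l, 0 ≤ l → ∀ t, 0 ≤ t → 0 ≤ v t l)
  (hode : ∀ l, 0 ≤ l → ∀ t, 0 ≤ t →
    HasDerivWithinAt (fun s => v s l) (-φ (v t l)) (Ici 0) t)

include hlip hq hφq hv0 hpos hode in
lemma lt_flow {l t : ℝ} (hl : q < l) (ht : 0 ≤ t) : q < v t l := by
  have hl0 : 0 ≤ l := hq.trans hl.le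
  refine lt_of_hasDerivAt_of_lt hlip hq hφq (f := fun s => v s l) ht
    (fun s hs => (hode l hl0 s hs.1).continuousWithinAt.mono Icc_subset_Ici_self)
    (fun s hs => (hode l hl0 s hs.1.le).hasDerivAt (Ici_mem_nhds hs.1))
    (fun s hs => hpos l hl0 s hs.1) ?_
  rwa [hv0 l hl0]

include hlip hq hφq hint hφpos hv0 hpos hode

lemma invTailIntegral_flow {l t : ℝ} (hl : q < l) (ht : 0 ≤ t) :
    invTailIntegral φ (v t l) = invTailIntegral φ l + t := by
  have hl0 : 0 ≤ l := hq.trans hl.le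
  have := invTailIntegral_comp_eq hint hφpos (hlip.continuousOn.mono (Ioi_subset_Ici hq))
    (f := fun s => v s l) ht
    (fun s hs => (hode l hl0 s hs.1).continuousWithinAt.mono Icc_subset_Ici_self)
    (fun s hs => (hode l hl0 s hs.1).mono (Ici_subset_Ici.2 hs.1))
    (fun s hs => lt_flow hlip hq hφq hv0 hpos hode hl hs.1)
  rwa [hv0 l hl0, sub_zero] at this

lemma exists_invTailIntegral_eq {t : ℝ} (ht : 0 < t) : ∃ x ∈ Ioi q, invTailIntegral φ x = t := by
  obtain ⟨l, hlt, hl⟩ :=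
    (((tendsto_invTailIntegral_atTop hint).eventually (gt_mem_nhds ht)).and
      (eventually_gt_atTop q)).exists
  refine ⟨v (t - invTailIntegral φ l) l, lt_flow hlip hq hφq hv0 hpos hode hl (by linarith), ?_⟩
  rw [invTailIntegral_flow hlip hq hφq hint hφpos hv0 hpos hode hl (by linarith)]
  ring

lemma vbar_spec {t : ℝ} (ht : 0 < t) :
    q < vbar φ q t ∧ invTailIntegral φ (vbar φ q t) = t :=
  Function.invFunOn_pos (exists_invTailIntegral_eq hlip hq hφq hint hφpos hv0 hpos hode ht)

lemma flow_vbar {s r : ℝ} (hs : 0 < s) (hr : 0 ≤ r) : v r (vbar φ q s) = vbar φ q (s + r) := by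
  have hVs := vbar_spec hlip hq hφq hint hφpos hv0 hpos hode hs
  have hVsr := vbar_spec hlip hq hφq hint hφpos hv0 hpos hode (add_pos_of_pos_of_nonneg hs hr)
  refine (strictAntiOn_invTailIntegral hint hφpos).injOn
    (lt_flow hlip hq hφq hv0 hpos hode hVs.1 hr) hVsr.1 ?_
  rw [invTailIntegral_flow hlip hq hφq hint hφpos hv0 hpos hode hVs.1 hr, hVs.2, hVsr.2]

lemma hasDerivAt_vbar {t : ℝ} (ht : 0 < t) : HasDerivAt (vbar φ q) (-φ (vbar φ q t)) t := by
  have hs : 0 < t / 2 := half_pos ht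
  have hVs : 0 ≤ vbar φ q (t / 2) :=
    hq.trans (vbar_spec hlip hq hφq hint hφpos hv0 hpos hode hs).1.le
  have hflow : ∀ τ, t / 2 ≤ τ → v (τ - t / 2) (vbar φ q (t / 2)) = vbar φ q τ := fun τ hτ => by
    rw [flow_vbar hlip hq hφq hint hφpos hv0 hpos hode hs (sub_nonneg.2 hτ), add_sub_cancel]
  have := ((hode _ hVs (t - t / 2) (by linarith)).hasDerivAt
    (Ici_mem_nhds (by linarith))).comp_sub_const t (t / 2)
  rw [hflow t (by linarith)] at this
  refine this.congr_of_eventuallyEq ?_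
  filter_upwards [Ici_mem_nhds (show t / 2 < t by linarith)] with τ hτ using (hflow τ hτ).symm

lemma tendsto_flow_vbar {t : ℝ} (ht : 0 < t) :
    Tendsto (fun l => v t l) atTop (𝓝 (vbar φ q t)) := by
  have hlim : Tendsto (fun l => invTailIntegral φ l + t) atTop (𝓝 t) := by
    simpa using (tendsto_invTailIntegral_atTop hint).add_const t
  refine ((hasDerivAt_vbar hlip hq hφq hint hφpos hv0 hpos hode ht).continuousAt.tendsto.comp
    hlim).congr' ?_
  filter_upwards [eventually_gt_atTop q] with l hl
  have hspec := vbar_spec hlip hq hφq hint hφpos hv0 hpos hode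
    (add_pos (invTailIntegral_pos hint hφpos hl) ht)
  refine (strictAntiOn_invTailIntegral hint hφpos).injOn hspec.1
    (lt_flow hlip hq hφq hv0 hpos hode hl ht.le) ?_
  rw [hspec.2, invTailIntegral_flow hlip hq hφq hint hφpos hv0 hpos hode hl ht.le]

lemma tendsto_vbar_nhdsGT_zero : Tendsto (vbar φ q) (𝓝[>] 0) atTop := by
  refine tendsto_atTop.2 fun M => ?_
  set x := max M (q + 1)
  have hx : q < x := (lt_add_one q).trans_le (le_max_right _ _)
  filter_upwards [Ioo_mem_nhdsGT (invTailIntegral_pos hint hφpos hx)] with t ht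
  have hspec := vbar_spec hlip hq hφq hint hφpos hv0 hpos hode ht.1
  by_contra! h
  have := (strictAntiOn_invTailIntegral hint hφpos) hspec.1 hx (h.trans_le (le_max_left _ _))
  linarith [hspec.2, ht.2]

end Flow

theorem grey_condition_vbar_general
    (b c : ℝ) (m : Measure ℝ)
    (hm : ∫⁻ u in Ioi (0 : ℝ), ENNReal.ofReal (min u (u ^ 2)) ∂m ≠ ⊤)
    (φ : ℝ → ℝ)
    (hφ : ∀ z : ℝ, φ z =
      b * z + c * z ^ 2 + ∫ u in Ioi (0 : ℝ), (Real.exp (-z * u) - 1 + z * u) ∂m)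
    (θ : ℝ) (hφθ : ∀ z, θ ≤ z → 0 < φ z)
    (hint : IntegrableOn (fun z => (φ z)⁻¹) (Ici θ))
    (v : ℝ → ℝ → ℝ)
    (hv0 : ∀ l, 0 ≤ l → v 0 l = l)
    (hpos : ∀ l, 0 ≤ l → ∀ t, 0 ≤ t → 0 ≤ v t l)
    (hode : ∀ l, 0 ≤ l → ∀ t, 0 ≤ t →
      HasDerivWithinAt (fun s => v s l) (-φ (v t l)) (Ici 0) t) :
    ∃ V : ℝ → ℝ,
      (∀ t, 0 < t → Tendsto (fun l => v t l) atTop (nhds (V t))) ∧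
      (∀ t, 0 < t → (∫ z in Ioi (V t), (φ z)⁻¹) = t) ∧
      (∀ t, 0 < t → HasDerivAt V (-φ (V t)) t) ∧
      Tendsto V (nhdsWithin 0 (Ioi 0)) atTop ∧
      (∀ W : ℝ → ℝ, (∀ t, 0 < t → 0 ≤ W t) →
        (∀ t, 0 < t → HasDerivAt W (-φ (W t)) t) →
        Tendsto W (nhdsWithin 0 (Ioi 0)) atTop →
        ∀ t, 0 < t → W t = V t) := by
  have hlip : LocallyLipschitzOn (Ici 0) φ := locallyLipschitzOn_branching hm hφ
  obtain ⟨q, hq, hφq, hφpos⟩ := exists_greatest_zero hlip.continuousOn (by simp [hφ 0]) hφθ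
  have hint' : ∀ a, q < a → IntegrableOn (fun z => (φ z)⁻¹) (Ioi a) := fun _ ha =>
    integrableOn_inv_Ioi_of_integrableOn_Ici (hlip.continuousOn.mono (Ioi_subset_Ici hq))
      hφpos hint ha
  refine ⟨vbar φ q, fun t ht => tendsto_flow_vbar hlip hq hφq hint' hφpos hv0 hpos hode ht,
    fun t ht => (vbar_spec hlip hq hφq hint' hφpos hv0 hpos hode ht).2,
    fun t ht => hasDerivAt_vbar hlip hq hφq hint' hφpos hv0 hpos hode ht,
    tendsto_vbar_nhdsGT_zero hlip hq hφq hint' hφpos hv0 hpos hode,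
    fun W hW0 hW' hW t ht => ?_⟩
  have hV := vbar_spec hlip hq hφq hint' hφpos hv0 hpos hode ht
  exact (strictAntiOn_invTailIntegral hint' hφpos).injOn
    (lt_of_tendsto_atTop hlip hq hφq hW0 hW' hW ht) hV.1
    ((invTailIntegral_eq_of_tendsto_atTop hlip hq hφq hW0 hW' hW hint' hφpos ht).trans hV.2.symm)

/-- Under Grey's condition, `v̄_t = lim_{λ→∞} v_t(λ)` is finite for `t > 0`,
satisfies `∫_{v̄_t}^∞ φ(z)⁻¹ dz = t`, and is the unique positive solution of
`d v̄_t/dt = -φ(v̄_t)` with singular initial condition `v̄_{0+} = ∞`. -/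
theorem grey_condition_vbar
    (b c : ℝ) (hc : 0 ≤ c) (m : Measure ℝ)
    (hm : ∫⁻ u in Ioi (0 : ℝ), ENNReal.ofReal (min u (u ^ 2)) ∂m ≠ ⊤)
    (φ : ℝ → ℝ)
    (hφ : ∀ z : ℝ, φ z =
      b * z + c * z ^ 2 + ∫ u in Ioi (0 : ℝ), (Real.exp (-z * u) - 1 + z * u) ∂m)
    (θ : ℝ) (hθ : 0 < θ) (hφθ : ∀ z, θ ≤ z → 0 < φ z)
    (hint : IntegrableOn (fun z => (φ z)⁻¹) (Ici θ))
    (v : ℝ → ℝ → ℝ)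
    (hv0 : ∀ l, 0 ≤ l → v 0 l = l)
    (hpos : ∀ l, 0 ≤ l → ∀ t, 0 ≤ t → 0 ≤ v t l)
    (hode : ∀ l, 0 ≤ l → ∀ t, 0 ≤ t →
      HasDerivWithinAt (fun s => v s l) (-φ (v t l)) (Ici 0) t) :
    ∃ V : ℝ → ℝ,
      (∀ t, 0 < t → Tendsto (fun l => v t l) atTop (nhds (V t))) ∧
      (∀ t, 0 < t → (∫ z in Ioi (V t), (φ z)⁻¹) = t) ∧
      (∀ t, 0 < t → HasDerivAt V (-φ (V t)) t) ∧
      Tendsto V (nhdsWithin 0 (Ioi 0)) atTop ∧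
      (∀ W : ℝ → ℝ, (∀ t, 0 < t → 0 ≤ W t) →
        (∀ t, 0 < t → HasDerivAt W (-φ (W t)) t) →
        Tendsto W (nhdsWithin 0 (Ioi 0)) atTop →
        ∀ t, 0 < t → W t = V t) :=
  grey_condition_vbar_general b c m hm φ hφ θ hφθ hint v hv0 hpos hode
end

section
/- Let φ be a branching mechanism with δ := φ'(∞) < ∞. Then c = 0, φ(λ) = δλ + ∫_{(0,∞)}(e^{-λz}-1) m(dz), and the cumulant semigroup satisfies v_t(λ) = e^{-δt} λ + ∫_0^t e^{-δs} ∫_{(0,∞)} (1 - e^{-u v_{t-s}(λ)}) m(du) ds for all t ≥ 0, λ ≥ 0. -/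
/-!
Differentiating under the integral sign gives `φ'(z) = b + 2cz + ∫ u (1 - e^{-zu}) m(du)` for
`z > 0`, with a nonnegative integral; so a finite limit `δ` forces `c = 0`, and monotone convergence
then gives `∫ u m(du) = δ - b < ∞`. The compensator `zu` can therefore be integrated separately,
which is the representation of `φ`. Finally `w = v_·(λ)` solves
`w' = -φ(w) = -δ w + ∫ (1 - e^{-uw}) m(du)`, and variation of constants gives the integral equation.
-/

open MeasureTheory Set Filter
open scoped Topology

namespace Real

lemma one_sub_exp_neg_mul_nonneg {x u : ℝ} (hx : 0 ≤ x) (hu : 0 ≤ u) :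
    0 ≤ 1 - exp (-x * u) := by
  linarith [exp_le_one_iff.2 (by nlinarith : -x * u ≤ 0)]

lemma exp_neg_mul_sub_one_add_mul_nonneg (x u : ℝ) : 0 ≤ exp (-x * u) - 1 + x * u := by
  linarith [add_one_le_exp (-x * u)]

/-- The inequality `1 + y ≤ e^y`, multiplied by `e^{-y}`. -/
lemma exp_neg_sub_one_add_le_mul (y : ℝ) : exp (-y) - 1 + y ≤ y * (1 - exp (-y)) := by
  have h := mul_le_mul_of_nonneg_left (add_one_le_exp y) (exp_pos (-y)).le
  rw [← exp_add, neg_add_cancel, exp_zero] at h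
  linarith

lemma mul_one_sub_exp_neg_mul_le {x u : ℝ} (hx : 0 ≤ x) (hu : 0 ≤ u) :
    u * (1 - exp (-x * u)) ≤ (x + 1) * min u (u ^ 2) := by
  have hle_one : 1 - exp (-x * u) ≤ 1 := by linarith [exp_pos (-x * u)]
  have hle_mul : 1 - exp (-x * u) ≤ x * u := by
    linarith [neg_mul x u ▸ one_sub_le_exp_neg (x * u)]
  rcases le_total u 1 with h1 | h1
  · rw [min_eq_right (by nlinarith)]
    nlinarith [mul_le_mul_of_nonneg_left hle_mul hu]
  · rw [min_eq_left (by nlinarith)]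
    nlinarith [mul_le_mul_of_nonneg_left hle_one hu]

lemma exp_neg_mul_sub_one_add_mul_le {x u : ℝ} (hx : 0 ≤ x) (hu : 0 ≤ u) :
    exp (-x * u) - 1 + x * u ≤ x * ((x + 1) * min u (u ^ 2)) := by
  calc exp (-x * u) - 1 + x * u ≤ x * u * (1 - exp (-x * u)) := by
        simpa [neg_mul] using exp_neg_sub_one_add_le_mul (x * u)
    _ = x * (u * (1 - exp (-x * u))) := by ring
    _ ≤ x * ((x + 1) * min u (u ^ 2)) :=
        mul_le_mul_of_nonneg_left (mul_one_sub_exp_neg_mul_le hx hu) hx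

lemma hasDerivAt_exp_neg_mul_sub_one_add_mul (x u : ℝ) :
    HasDerivAt (fun x => exp (-x * u) - 1 + x * u) (u * (1 - exp (-x * u))) x := by
  have h := (((hasDerivAt_neg x).mul_const u).exp.sub_const 1).add ((hasDerivAt_id x).mul_const u)
  exact h.congr_deriv (by ring)

end Real

open Real

section LevyIntegral

variable {μ : Measure ℝ}

lemma integrable_of_norm_le_mul_min (hμ : ∀ᵐ u ∂μ, 0 < u)
    (hmin : Integrable (fun u => min u (u ^ 2)) μ) {f : ℝ → ℝ} (hf : AEStronglyMeasurable f μ)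
    (C : ℝ) (hbound : ∀ u, 0 < u → ‖f u‖ ≤ C * min u (u ^ 2)) : Integrable f μ :=
  (hmin.const_mul C).mono' hf (hμ.mono hbound)

lemma integrable_exp_neg_mul_sub_one_add_mul (hμ : ∀ᵐ u ∂μ, 0 < u)
    (hmin : Integrable (fun u => min u (u ^ 2)) μ) {x : ℝ} (hx : 0 ≤ x) :
    Integrable (fun u => exp (-x * u) - 1 + x * u) μ :=
  integrable_of_norm_le_mul_min hμ hmin (by fun_prop) (x * (x + 1)) fun u hu => by
    rw [norm_of_nonneg (exp_neg_mul_sub_one_add_mul_nonneg x u), mul_assoc]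
    exact exp_neg_mul_sub_one_add_mul_le hx hu.le

lemma integrable_mul_one_sub_exp_neg_mul (hμ : ∀ᵐ u ∂μ, 0 < u)
    (hmin : Integrable (fun u => min u (u ^ 2)) μ) {x : ℝ} (hx : 0 ≤ x) :
    Integrable (fun u => u * (1 - exp (-x * u))) μ :=
  integrable_of_norm_le_mul_min hμ hmin (by fun_prop) (x + 1) fun u hu => by
    rw [norm_of_nonneg (mul_nonneg hu.le (one_sub_exp_neg_mul_nonneg hx hu.le))]
    exact mul_one_sub_exp_neg_mul_le hx hu.le

lemma integral_mul_one_sub_exp_neg_mul_nonneg (hμ : ∀ᵐ u ∂μ, 0 < u) {x : ℝ} (hx : 0 ≤ x) :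
    0 ≤ ∫ u, u * (1 - exp (-x * u)) ∂μ :=
  integral_nonneg_of_ae <| hμ.mono fun _ hu =>
    mul_nonneg hu.le (one_sub_exp_neg_mul_nonneg hx hu.le)

lemma hasDerivAt_integral_exp_neg_mul_sub_one_add_mul (hμ : ∀ᵐ u ∂μ, 0 < u)
    (hmin : Integrable (fun u => min u (u ^ 2)) μ) {z : ℝ} (hz : 0 < z) :
    HasDerivAt (fun x => ∫ u, (exp (-x * u) - 1 + x * u) ∂μ)
      (∫ u, u * (1 - exp (-z * u)) ∂μ) z := by
  have hball : Metric.ball z z ⊆ Icc 0 (2 * z) := fun x hx => by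
    rw [Metric.mem_ball, Real.dist_eq, abs_lt] at hx
    constructor <;> linarith
  refine (hasDerivAt_integral_of_dominated_loc_of_deriv_le
    (F := fun x u => exp (-x * u) - 1 + x * u) (F' := fun x u => u * (1 - exp (-x * u)))
    (Metric.ball_mem_nhds z hz)
    (Eventually.of_forall fun x => by fun_prop)
    (integrable_exp_neg_mul_sub_one_add_mul hμ hmin hz.le) (by fun_prop)
    (bound := fun u => (2 * z + 1) * min u (u ^ 2)) ?_ (hmin.const_mul _) ?_).2
  · filter_upwards [hμ] with u hu x hx
    obtain ⟨hx0, hx2⟩ := hball hx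
    rw [norm_of_nonneg (mul_nonneg hu.le (one_sub_exp_neg_mul_nonneg hx0 hu.le))]
    exact (mul_one_sub_exp_neg_mul_le hx0 hu.le).trans
      (mul_le_mul_of_nonneg_right (by linarith) (le_min hu.le (by positivity)))
  · exact Eventually.of_forall fun u x _ => hasDerivAt_exp_neg_mul_sub_one_add_mul x u

lemma continuousOn_integral_exp_neg_mul_sub_one_add_mul (hμ : ∀ᵐ u ∂μ, 0 < u)
    (hmin : Integrable (fun u => min u (u ^ 2)) μ) :
    ContinuousOn (fun x => ∫ u, (exp (-x * u) - 1 + x * u) ∂μ) (Ici 0) := by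
  have hIcc : ∀ M, 0 ≤ M →
      ContinuousOn (fun x => ∫ u, (exp (-x * u) - 1 + x * u) ∂μ) (Icc 0 M) := fun M hM =>
    continuousOn_of_dominated (bound := fun u => M * ((M + 1) * min u (u ^ 2)))
      (fun x _ => by fun_prop)
      (fun x hx => hμ.mono fun u hu => by
        rw [norm_of_nonneg (exp_neg_mul_sub_one_add_mul_nonneg x u)]
        exact (exp_neg_mul_sub_one_add_mul_le hx.1 hu.le).trans <|
          mul_le_mul hx.2 (mul_le_mul_of_nonneg_right (by linarith [hx.2])
            (le_min hu.le (by positivity)))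
            (mul_nonneg (by linarith [hx.1]) (le_min hu.le (by positivity))) hM)
      ((hmin.const_mul _).const_mul _) (Eventually.of_forall fun u => by fun_prop)
  intro x hx
  refine ((hIcc (x + 1) (by linarith [mem_Ici.1 hx])).continuousWithinAt
    ⟨hx, by linarith⟩).mono_of_mem_nhdsWithin ?_
  rw [← Ici_inter_Iic]
  exact inter_mem_nhdsWithin _ (Iic_mem_nhds (by linarith))

end LevyIntegral

theorem MeasureTheory.integrable_and_integral_eq_of_monotone_of_tendsto_integral
    {α : Type*} [MeasurableSpace α] {μ : Measure α} {f : ℕ → α → ℝ} {F : α → ℝ} {L : ℝ}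
    (hf : ∀ n, Integrable (f n) μ) (hf_nonneg : ∀ n, 0 ≤ᵐ[μ] f n)
    (h_mono : ∀ᵐ x ∂μ, Monotone fun n => f n x)
    (h_tendsto : ∀ᵐ x ∂μ, Tendsto (fun n => f n x) atTop (𝓝 (F x)))
    (hL : Tendsto (fun n => ∫ x, f n x ∂μ) atTop (𝓝 L)) :
    Integrable F μ ∧ ∫ x, F x ∂μ = L := by
  have hF_meas : AEStronglyMeasurable F μ :=
    aestronglyMeasurable_of_tendsto_ae _ (fun n => (hf n).1) h_tendsto
  have hF_nonneg : 0 ≤ᵐ[μ] F := by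
    filter_upwards [h_tendsto, ae_all_iff.2 hf_nonneg] with x hx hx0
    exact ge_of_tendsto' hx hx0
  have hL_nonneg : 0 ≤ L := ge_of_tendsto' hL fun n => integral_nonneg_of_ae (hf_nonneg n)
  have hlintegral : ∫⁻ x, ENNReal.ofReal (F x) ∂μ = ENNReal.ofReal L := by
    refine tendsto_nhds_unique (lintegral_tendsto_of_tendsto_of_monotone
      (fun n => (hf n).1.aemeasurable.ennreal_ofReal)
      (h_mono.mono fun x hx _ _ hij => ENNReal.ofReal_le_ofReal (hx hij))
      (h_tendsto.mono fun x hx => ENNReal.tendsto_ofReal hx)) ?_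
    simp_rw [← ofReal_integral_eq_lintegral_ofReal (hf _) (hf_nonneg _)]
    exact ENNReal.tendsto_ofReal hL
  refine ⟨⟨hF_meas, (hasFiniteIntegral_iff_ofReal hF_nonneg).2 ?_⟩, ?_⟩
  · rw [hlintegral]; exact ENNReal.ofReal_lt_top
  · rw [integral_eq_lintegral_of_nonneg_ae hF_nonneg hF_meas, hlintegral,
      ENNReal.toReal_ofReal hL_nonneg]

/-- In the theorem, `μ` is the restriction of `m` to `(0, ∞)`. -/
noncomputable def branchingMechanism (b c : ℝ) (μ : Measure ℝ) (z : ℝ) : ℝ :=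
  b * z + c * z ^ 2 + ∫ u, (exp (-z * u) - 1 + z * u) ∂μ

section BranchingMechanism

variable {b c δ : ℝ} {μ : Measure ℝ}

lemma hasDerivAt_branchingMechanism (hμ : ∀ᵐ u ∂μ, 0 < u)
    (hmin : Integrable (fun u => min u (u ^ 2)) μ) {z : ℝ} (hz : 0 < z) :
    HasDerivAt (branchingMechanism b c μ)
      (b + 2 * c * z + ∫ u, u * (1 - exp (-z * u)) ∂μ) z := by
  have h := (((hasDerivAt_id z).const_mul b).add ((hasDerivAt_pow 2 z).const_mul c)).add
    (hasDerivAt_integral_exp_neg_mul_sub_one_add_mul hμ hmin hz)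
  exact h.congr_deriv (by ring)

lemma continuousOn_branchingMechanism (hμ : ∀ᵐ u ∂μ, 0 < u)
    (hmin : Integrable (fun u => min u (u ^ 2)) μ) :
    ContinuousOn (branchingMechanism b c μ) (Ici 0) :=
  (Continuous.continuousOn (by fun_prop)).add
    (continuousOn_integral_exp_neg_mul_sub_one_add_mul hμ hmin)

lemma eventually_deriv_branchingMechanism (hμ : ∀ᵐ u ∂μ, 0 < u)
    (hmin : Integrable (fun u => min u (u ^ 2)) μ) :
    ∀ᶠ z in atTop, deriv (branchingMechanism b c μ) z =
      b + 2 * c * z + ∫ u, u * (1 - exp (-z * u)) ∂μ :=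
  (eventually_gt_atTop 0).mono fun _ hz => (hasDerivAt_branchingMechanism hμ hmin hz).deriv

/-- A positive quadratic coefficient would make the derivative grow linearly. -/
lemma eq_zero_of_tendsto_deriv_branchingMechanism (hμ : ∀ᵐ u ∂μ, 0 < u)
    (hmin : Integrable (fun u => min u (u ^ 2)) μ) (hc : 0 ≤ c)
    (hδ : Tendsto (deriv (branchingMechanism b c μ)) atTop (𝓝 δ)) : c = 0 := by
  by_contra hne
  have hlin : Tendsto (fun z => b + 2 * c * z) atTop atTop :=
    tendsto_atTop_add_const_left _ b
      (tendsto_id.const_mul_atTop (by positivity : 0 < 2 * c))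
  refine not_tendsto_nhds_of_tendsto_atTop (tendsto_atTop_mono' _ ?_ hlin) δ hδ
  filter_upwards [eventually_deriv_branchingMechanism hμ hmin, eventually_ge_atTop 0]
    with z hz hz0
  rw [hz]
  linarith [integral_mul_one_sub_exp_neg_mul_nonneg hμ hz0]

lemma integrable_id_and_integral_id_eq (hμ : ∀ᵐ u ∂μ, 0 < u)
    (hmin : Integrable (fun u => min u (u ^ 2)) μ) (hc : 0 ≤ c)
    (hδ : Tendsto (deriv (branchingMechanism b c μ)) atTop (𝓝 δ)) :
    Integrable (fun u => u) μ ∧ ∫ u, u ∂μ = δ - b := by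
  have hc0 := eq_zero_of_tendsto_deriv_branchingMechanism hμ hmin hc hδ
  have hI : Tendsto (fun x => ∫ u, u * (1 - exp (-x * u)) ∂μ) atTop (𝓝 (δ - b)) := by
    refine (hδ.sub_const b).congr' ?_
    filter_upwards [eventually_deriv_branchingMechanism hμ hmin] with z hz
    rw [hz, hc0]; ring
  refine integrable_and_integral_eq_of_monotone_of_tendsto_integral
    (f := fun (n : ℕ) u => u * (1 - exp (-n * u)))
    (fun n => integrable_mul_one_sub_exp_neg_mul hμ hmin n.cast_nonneg)
    (fun n => hμ.mono fun u hu =>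
      mul_nonneg hu.le (one_sub_exp_neg_mul_nonneg n.cast_nonneg hu.le))
    ?_ ?_ (hI.comp tendsto_natCast_atTop_atTop)
  · filter_upwards [hμ] with u hu i j hij
    have hij' : (i : ℝ) ≤ j := Nat.cast_le.2 hij
    exact mul_le_mul_of_nonneg_left
      (sub_le_sub_left (exp_le_exp.2 (by nlinarith)) 1) hu.le
  · filter_upwards [hμ] with u hu
    have hexp : Tendsto (fun n : ℕ => exp (-n * u)) atTop (𝓝 0) := by
      simp_rw [neg_mul]
      exact tendsto_exp_atBot.comp <| tendsto_neg_atTop_atBot.comp <|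
        tendsto_natCast_atTop_atTop.atTop_mul_const hu
    simpa using ((tendsto_const_nhds (x := (1 : ℝ))).sub hexp).const_mul u

lemma branchingMechanism_eq_drift_add_integral (hμ : ∀ᵐ u ∂μ, 0 < u)
    (hmin : Integrable (fun u => min u (u ^ 2)) μ) (hc : 0 ≤ c)
    (hδ : Tendsto (deriv (branchingMechanism b c μ)) atTop (𝓝 δ)) {l : ℝ} (hl : 0 ≤ l) :
    branchingMechanism b c μ l = δ * l + ∫ u, (exp (-l * u) - 1) ∂μ := by
  obtain ⟨hid, hid_eq⟩ := integrable_id_and_integral_id_eq hμ hmin hc hδ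
  have hexp : Integrable (fun u => exp (-l * u) - 1) μ :=
    (hid.const_mul l).mono' (by fun_prop) <| hμ.mono fun u hu => by
      rw [norm_sub_rev, norm_of_nonneg (one_sub_exp_neg_mul_nonneg hl hu.le)]
      linarith [neg_mul l u ▸ one_sub_le_exp_neg (l * u)]
  rw [branchingMechanism, eq_zero_of_tendsto_deriv_branchingMechanism hμ hmin hc hδ,
    integral_add hexp (hid.const_mul l), integral_const_mul, hid_eq]
  ring

lemma integral_one_sub_exp_neg_mul_eq (hμ : ∀ᵐ u ∂μ, 0 < u)
    (hmin : Integrable (fun u => min u (u ^ 2)) μ) (hc : 0 ≤ c)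
    (hδ : Tendsto (deriv (branchingMechanism b c μ)) atTop (𝓝 δ)) {l : ℝ} (hl : 0 ≤ l) :
    ∫ u, (1 - exp (-u * l)) ∂μ = δ * l - branchingMechanism b c μ l := by
  have hneg : ∫ u, (1 - exp (-u * l)) ∂μ = -∫ u, (exp (-l * u) - 1) ∂μ := by
    rw [← integral_neg]
    congr 1 with u
    ring_nf
  rw [hneg, branchingMechanism_eq_drift_add_integral hμ hmin hc hδ hl]
  ring

end BranchingMechanism

section VariationOfConstants

variable {w f : ℝ → ℝ} {l t : ℝ}

lemma hasDerivAt_of_eq_sub_integral (hf : ContinuousOn f (Icc 0 t))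
    (heq : ∀ s ∈ Icc 0 t, w s = l - ∫ r in (0 : ℝ)..s, f r) {s : ℝ} (hs : s ∈ Ioo 0 t) :
    HasDerivAt w (-f s) s := by
  have hprim := intervalIntegral.integral_hasDerivAt_right
    ((hf.mono (Icc_subset_Icc le_rfl hs.2.le)).intervalIntegrable_of_Icc hs.1.le)
    (hf.mono Ioo_subset_Icc_self |>.stronglyMeasurableAtFilter isOpen_Ioo s hs)
    (hf.continuousAt (Icc_mem_nhds hs.1 hs.2))
  refine ((hasDerivAt_const s l).sub hprim).congr_deriv (zero_sub _) |>.congr_of_eventuallyEq ?_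
  filter_upwards [Ioo_mem_nhds hs.1 hs.2] with r hr
  exact heq r (Ioo_subset_Icc_self hr)

lemma integral_exp_mul_eq_of_eq_sub_integral (δ : ℝ) (ht : 0 ≤ t)
    (hw : ContinuousOn w (Icc 0 t)) (hf : ContinuousOn f (Icc 0 t))
    (heq : ∀ s ∈ Icc 0 t, w s = l - ∫ r in (0 : ℝ)..s, f r) :
    ∫ s in (0 : ℝ)..t, exp (δ * s) * (δ * w s - f s) = exp (δ * t) * w t - l := by
  have hw0 : w 0 = l := by simpa using heq 0 ⟨le_rfl, ht⟩
  rw [intervalIntegral.integral_eq_sub_of_hasDeriv_right_of_le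
    (f := fun s => exp (δ * s) * w s) ht (by fun_prop) (fun s hs => ?_)
    (ContinuousOn.intervalIntegrable_of_Icc ht (by fun_prop)), hw0]
  · simp
  · have hexp : HasDerivAt (fun s => exp (δ * s)) (exp (δ * s) * δ) s := by
      simpa using ((hasDerivAt_id s).const_mul δ).exp
    exact (hexp.mul (hasDerivAt_of_eq_sub_integral hf heq hs)).hasDerivWithinAt.congr_deriv
      (by ring)

/-- Variation of constants for `w' = -f`, written as `w' = -δ w + (δ w - f)`. -/
lemma eq_exp_mul_add_integral_of_eq_sub_integral (δ : ℝ) (ht : 0 ≤ t)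
    (hw : ContinuousOn w (Icc 0 t)) (hf : ContinuousOn f (Icc 0 t))
    (heq : ∀ s ∈ Icc 0 t, w s = l - ∫ r in (0 : ℝ)..s, f r) :
    w t = exp (-δ * t) * l +
      ∫ s in (0 : ℝ)..t, exp (-δ * s) * (δ * w (t - s) - f (t - s)) := by
  set g := fun s => exp (δ * s) * (δ * w s - f s)
  have hreflect : ∫ s in (0 : ℝ)..t, exp (-δ * s) * (δ * w (t - s) - f (t - s)) =
      exp (-δ * t) * ∫ s in (0 : ℝ)..t, g s := by
    calc _ = ∫ s in (0 : ℝ)..t, exp (-δ * t) * g (t - s) :=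
          intervalIntegral.integral_congr fun s _ => by
            simp only [g, ← mul_assoc, ← exp_add]
            ring_nf
      _ = exp (-δ * t) * ∫ s in (0 : ℝ)..t, g s := by
          rw [intervalIntegral.integral_const_mul]
          simp
  rw [hreflect, integral_exp_mul_eq_of_eq_sub_integral δ ht hw hf heq, mul_sub, ← mul_assoc,
    ← exp_add]
  simp

end VariationOfConstants

/-- If `δ := φ'(∞) < ∞`, then `c = 0`, `φ(λ) = δλ + ∫ (e^{-λz} - 1) m(dz)` and the cumulant
semigroup satisfies
`v_t(λ) = e^{-δt} λ + ∫_0^t e^{-δs} ∫ (1 - e^{-u v_{t-s}(λ)}) m(du) ds`. -/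
theorem finite_derivative_cumulant_representation
    (b c : ℝ) (hc : 0 ≤ c) (m : Measure ℝ)
    (hm : ∫⁻ u in Ioi (0 : ℝ), ENNReal.ofReal (min u (u ^ 2)) ∂m ≠ ⊤)
    (φ : ℝ → ℝ)
    (hφ : ∀ z : ℝ, φ z =
      b * z + c * z ^ 2 + ∫ u in Ioi (0 : ℝ), (Real.exp (-z * u) - 1 + z * u) ∂m)
    (δ : ℝ) (hδ : Tendsto (fun z => deriv φ z) atTop (nhds δ))
    (v : ℝ → ℝ → ℝ)
    (hcont : ∀ l, 0 ≤ l → ContinuousOn (fun t => v t l) (Ici 0))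
    (hpos : ∀ l, 0 ≤ l → ∀ t, 0 ≤ t → 0 ≤ v t l)
    (heq : ∀ l, 0 ≤ l → ∀ t, 0 ≤ t → v t l = l - ∫ s in (0 : ℝ)..t, φ (v s l)) :
    c = 0 ∧
    (∀ l, 0 ≤ l →
      φ l = δ * l + ∫ u in Ioi (0 : ℝ), (Real.exp (-l * u) - 1) ∂m) ∧
    (∀ t, 0 ≤ t → ∀ l, 0 ≤ l →
      v t l = Real.exp (-δ * t) * l +
        ∫ s in (0 : ℝ)..t, Real.exp (-δ * s) *
          ∫ u in Ioi (0 : ℝ), (1 - Real.exp (-u * v (t - s) l)) ∂m) := by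
  have hμ : ∀ᵐ u ∂m.restrict (Ioi 0), 0 < u := ae_restrict_mem measurableSet_Ioi
  have hmin : Integrable (fun u => min u (u ^ 2)) (m.restrict (Ioi 0)) :=
    ⟨by fun_prop, (hasFiniteIntegral_iff_ofReal <| hμ.mono fun u hu =>
      le_min hu.le (by positivity)).2 hm.lt_top⟩
  obtain rfl : φ = branchingMechanism b c (m.restrict (Ioi 0)) := funext hφ
  refine ⟨eq_zero_of_tendsto_deriv_branchingMechanism hμ hmin hc hδ,
    fun l hl => branchingMechanism_eq_drift_add_integral hμ hmin hc hδ hl, fun t ht l hl => ?_⟩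
  have hw : ContinuousOn (fun s => v s l) (Icc 0 t) := (hcont l hl).mono Icc_subset_Ici_self
  rw [eq_exp_mul_add_integral_of_eq_sub_integral δ ht hw
    ((continuousOn_branchingMechanism hμ hmin).comp hw fun s hs => hpos l hl s hs.1)
    fun s hs => heq l hl s hs.1]
  congr 1
  refine intervalIntegral.integral_congr fun s hs => ?_
  rw [uIcc_of_le ht] at hs
  rw [integral_one_sub_exp_neg_mul_eq hμ hmin hc hδ (hpos l hl _ (sub_nonneg.2 hs.2)),
    Function.comp_apply]
end
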